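/- arXiv:2209.13152 — 7 statements merged into one kernel-verified Lean document; each statement's English description precedes it below -/
import Mathlib

section
/- Let r ∈ ℱ. Then the following three subsets of ℝ^N coincide: (i) the inverse image f^{−1}(r) = {u ∈ ℝ^N : f(u) = r}; (ii) the time-domain inverse-embedding set {Wz : z ∈ ℝ^N and S·(z_0², …, z_{N−1}²)ᵀ = r}; (iii) the frequency-domain inverse-embedding set of all u ∈ ℝ^N such that u = W̃^H U for some U ∈ ℂ^N with Im(U_0) = 0, U_{N−k} = conj(U_k) for 1 ≤ k ≤ N−1, and S̃·(|U_0|², …, |U_{N−1}|²)ᵀ = r. -/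
open scoped BigOperators
open Complex Matrix

noncomputable section

/-- Circular autocovariance: `r i = ∑ t, u t * u ((t - i) mod N)`. -/
def autocov (N n : ℕ) (u : Fin N → ℝ) : Fin n → ℝ :=
  fun i => ∑ t : Fin N, u t * u ⟨(t.val + (N - i.val)) % N, Nat.mod_lt _ t.pos⟩

/-- The DFT matrix `W̃` with entries `N^{-1/2} e^{-j ϖ k t}`, `ϖ = 2π/N`. -/
def dft (N : ℕ) : Matrix (Fin N) (Fin N) ℂ := fun k t =>
  (Real.sqrt N : ℂ)⁻¹ * Complex.exp (-(Complex.I * (2 * Real.pi / N) * k.val * t.val))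

/-- The matrix `S̃` with entries `e^{j ϖ i k}`. -/
def Stilde (N n : ℕ) : Matrix (Fin n) (Fin N) ℂ := fun i k =>
  Complex.exp (Complex.I * (2 * Real.pi / N) * i.val * k.val)

/-- The matrix `S̃(γ)` with entries `γ e^{-j ϖ i k} + (1-γ) e^{j ϖ i k}`. -/
def StildeG (N n : ℕ) (γ : ℂ) : Matrix (Fin n) (Fin N) ℂ := fun i k =>
  γ * Complex.exp (-(Complex.I * (2 * Real.pi / N) * i.val * k.val)) +
    (1 - γ) * Complex.exp (Complex.I * (2 * Real.pi / N) * i.val * k.val)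

/-- The real matrix `S` with entries `cos(ϖ i k)`. -/
def Smat (N n : ℕ) : Matrix (Fin n) (Fin N) ℝ := fun i k =>
  Real.cos (2 * Real.pi / N * i.val * k.val)

/-- `ξ_m = (1, cos(mϖ), …, cos((N-1)mϖ))`. -/
def xi (N m : ℕ) : Fin N → ℝ := fun t => Real.cos (t.val * m * (2 * Real.pi / N))

/-- `ζ_m = (0, sin(mϖ), …, sin((N-1)mϖ))`. -/
def zeta (N m : ℕ) : Fin N → ℝ := fun t => Real.sin (t.val * m * (2 * Real.pi / N))

/-- The orthogonal matrix `W` whose columns are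
`√(2/N)·[ξ_0/√2, ξ_1, …, ξ_{N/2-1}, ξ_{N/2}/√2, ζ_{N/2-1}, …, ζ_1]` for even `N` and
`√(2/N)·[ξ_0/√2, ξ_1, …, ξ_{(N-1)/2}, ζ_{(N-1)/2}, …, ζ_1]` for odd `N`. -/
def Wmat (N : ℕ) : Matrix (Fin N) (Fin N) ℝ := fun t c =>
  Real.sqrt (2 / N) *
    (if 2 * c.val ≤ N then
      (if c.val = 0 ∨ 2 * c.val = N then (Real.sqrt 2)⁻¹ else 1) * xi N c.val t
    else zeta N (N - c.val) t)

/-- The cyclic shift (unit delay) matrix: `A t s = 1` iff `t ≡ s + 1 (mod N)`. -/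
def shiftA (N : ℕ) : Matrix (Fin N) (Fin N) ℝ := fun t s =>
  if (s.val + 1) % N = t.val then 1 else 0

/-- The set `X̃(r)` of real vectors `x` with `S̃ x = r`, nonnegative entries,
and the symmetry `x_k = x_{N-k}` for `1 ≤ k ≤ N-1`. -/
def Xset (N n : ℕ) (r : Fin n → ℝ) : Set (Fin N → ℝ) :=
  {x | (Stilde N n).mulVec (fun k => (x k : ℂ)) = (fun i => (r i : ℂ)) ∧
    (∀ k, 0 ≤ x k) ∧
    (∀ k : Fin N, ∀ hk : 1 ≤ k.val, x k = x ⟨N - k.val, Nat.sub_lt k.pos hk⟩)}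

/-- The set `ℱ = {f(u) : uᵀu = C}` of attainable autocovariances. -/
def Fset (N n : ℕ) (C : ℝ) : Set (Fin n → ℝ) :=
  {r | ∃ u : Fin N → ℝ, (∑ t, u t * u t) = C ∧ autocov N n u = r}

/-- Membership in the family `Λ_Q` (for even `N`): diagonal entries `1` at positions `0`
and `N/2`, arbitrary `2×2` unitary blocks at index pairs `{i, N-i}` for `1 ≤ i ≤ N/2-1`,
and all other entries zero. -/
def memLamQ {N : ℕ} (L : Matrix (Fin N) (Fin N) ℂ) : Prop :=
  (∀ a : Fin N, a.val = 0 → L a a = 1) ∧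
  (∀ a : Fin N, 2 * a.val = N → L a a = 1) ∧
  (∀ a b : Fin N, 1 ≤ a.val → 2 * a.val < N → a.val + b.val = N →
    (!![L a a, L a b; L b a, L b b]ᴴ * !![L a a, L a b; L b a, L b b] = 1 ∧
      !![L a a, L a b; L b a, L b b] * !![L a a, L a b; L b a, L b b]ᴴ = 1)) ∧
  (∀ a b : Fin N, ¬(a = b ∨ a.val + b.val = N) → L a b = 0)

/-! Since `W̃` is unitary and, for real `u`, the spectrum `U = W̃ u` satisfies `U_{-k} = conj U_k`,
the frequency-domain set is `f⁻¹(r)` as soon as the Wiener–Khinchin identity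
`∑ₖ e^{jϖik} |(W̃ u)_k|² = r_i` holds; that identity follows by expanding `|U_k|²` as a double sum
and summing the characters over `k`, which leaves exactly the circular lag-`i` products.
For the time-domain set, `W̃ (W z)` is an explicit Hermitian spectrum `Q z` with
`|(Q z)_k|² = (z_k² + z_{-k}²)/2`, so Wiener–Khinchin gives `f (W z) = S (z²)`; and `W` is
invertible because `Q z = 0` forces `z = 0`. -/

def expFrac (N : ℕ) (m : ℤ) : ℂ := Complex.exp (Complex.I * (2 * Real.pi / N) * m)

section expFrac

variable {N : ℕ}

lemma expFrac_add (a b : ℤ) : expFrac N (a + b) = expFrac N a * expFrac N b := by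
  rw [expFrac, expFrac, expFrac, ← Complex.exp_add]
  push_cast
  ring_nf

lemma expFrac_pow (m : ℤ) (k : ℕ) : expFrac N m ^ k = expFrac N (m * k) := by
  rw [expFrac, expFrac, ← Complex.exp_nat_mul]
  push_cast
  ring_nf

lemma starRingEnd_expFrac (m : ℤ) : starRingEnd ℂ (expFrac N m) = expFrac N (-m) := by
  rw [expFrac, expFrac, ← Complex.exp_conj]
  simp only [map_mul, map_div₀, Complex.conj_I, map_ofNat, Complex.conj_ofReal, map_natCast,
    map_intCast]
  push_cast
  ring_nf

lemma expFrac_val_mul_val (c t : Fin N) :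
    expFrac N (c.val * t.val) = (xi N c t : ℂ) + (zeta N c t : ℂ) * Complex.I := by
  rw [expFrac, xi, zeta, Complex.ofReal_cos, Complex.ofReal_sin, ← Complex.exp_mul_I]
  push_cast
  ring_nf

variable [NeZero N]

lemma expFrac_eq_one_iff (m : ℤ) : expFrac N m = 1 ↔ (N : ℤ) ∣ m := by
  have hN : (N : ℂ) ≠ 0 := Nat.cast_ne_zero.mpr (NeZero.ne N)
  rw [expFrac, Complex.exp_eq_one_iff]
  constructor
  · rintro ⟨c, hc⟩
    refine ⟨c, Int.cast_injective (α := ℂ) ?_⟩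
    have hπ : (2 * Real.pi * Complex.I : ℂ) ≠ 0 := by simp [Real.pi_ne_zero]
    push_cast
    apply mul_left_cancel₀ hπ
    field_simp at hc ⊢
    linear_combination hc
  · rintro ⟨c, rfl⟩
    exact ⟨c, by push_cast; field_simp⟩

lemma expFrac_eq_of_modEq {a b : ℤ} (h : a ≡ b [ZMOD N]) : expFrac N a = expFrac N b := by
  obtain ⟨c, hc⟩ := (Int.modEq_iff_dvd.mp h)
  rw [show b = a + (b - a) by ring, expFrac_add, (expFrac_eq_one_iff _).mpr ⟨c, hc⟩, mul_one]

lemma sum_expFrac_mul (m : ℤ) :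
    ∑ k : Fin N, expFrac N (m * k) = if (N : ℤ) ∣ m then (N : ℂ) else 0 := by
  rw [Fin.sum_univ_eq_sum_range (fun k => expFrac N (m * k))]
  simp_rw [← expFrac_pow]
  split_ifs with h
  · simp [(expFrac_eq_one_iff m).mpr h]
  · rw [geom_sum_eq (mt (expFrac_eq_one_iff m).mp h), expFrac_pow,
      (expFrac_eq_one_iff _).mpr (dvd_mul_of_dvd_right dvd_rfl m), sub_self, zero_div]

lemma expFrac_neg_val_mul (k : Fin N) (m : ℤ) :
    expFrac N ((-k : Fin N).val * m) = expFrac N (-(k.val * m)) := by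
  have hk : ((-k : Fin N).val : ℤ) ≡ -k.val [ZMOD N] := by
    rw [Fin.val_neg', Int.natCast_mod, Nat.cast_sub k.is_lt.le]
    exact (Int.mod_modEq _ _).trans (Int.modEq_iff_dvd.mpr ⟨-1, by ring⟩)
  rw [neg_mul_eq_neg_mul]
  exact expFrac_eq_of_modEq (hk.mul_right m)

end expFrac

lemma Fin.neg_eq_self_of_val_eq_zero_or {N : ℕ} [NeZero N] {c : Fin N}
    (h : c.val = 0 ∨ 2 * c.val = N) : -c = c := by
  ext
  rw [Fin.val_neg]
  split_ifs with h0
  · simp [h0]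
  · have := Fin.val_ne_zero_iff.mpr h0
    omega

lemma Fin.val_neg_of_val_ne_zero {N : ℕ} [NeZero N] {c : Fin N} (h : c.val ≠ 0) :
    (-c).val = N - c.val := by
  rw [Fin.val_neg, if_neg (fun h0 => h (by simp [h0]))]

lemma natCast_dvd_sub_iff_eq_mod {N s : ℕ} (x : ℕ) (hs : s < N) :
    (N : ℤ) ∣ (x : ℤ) - s ↔ s = x % N := by
  rw [← Nat.modEq_iff_dvd, Nat.ModEq, Nat.mod_eq_of_lt hs]

lemma Fintype.sum_eq_sum_of_add_comp_perm_eq {α M : Type*} [Fintype α] [AddCommMonoid M]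
    [IsAddTorsionFree M] {f g : α → M} (σ : Equiv.Perm α)
    (h : ∀ a, f a + f (σ a) = g a + g (σ a)) : ∑ a, f a = ∑ a, g a := by
  apply nsmul_right_injective two_ne_zero
  simp only [two_nsmul]
  nth_rewrite 2 [← Equiv.sum_comp σ f]
  nth_rewrite 2 [← Equiv.sum_comp σ g]
  simp only [← Finset.sum_add_distrib, h]

section dft

variable {N : ℕ}

lemma ofReal_sqrt_inv_mul_self :
    (√(N : ℝ) : ℂ)⁻¹ * (√(N : ℝ) : ℂ)⁻¹ = (N : ℂ)⁻¹ := by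
  rw [← mul_inv, ← Complex.ofReal_mul, Real.mul_self_sqrt (Nat.cast_nonneg N),
    Complex.ofReal_natCast]

lemma dft_apply_eq_expFrac (k t : Fin N) :
    dft N k t = (√(N : ℝ) : ℂ)⁻¹ * expFrac N (-(k.val * t.val)) := by
  rw [dft, expFrac]
  push_cast
  ring_nf

lemma star_dft_apply (k t : Fin N) :
    star (dft N k t) = (√(N : ℝ) : ℂ)⁻¹ * expFrac N (k.val * t.val) := by
  rw [dft_apply_eq_expFrac, Complex.star_def, map_mul, map_inv₀, Complex.conj_ofReal,
    starRingEnd_expFrac, neg_neg]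

lemma dft_mulVec_apply (v : Fin N → ℂ) (k : Fin N) :
    (dft N *ᵥ v) k = (√(N : ℝ) : ℂ)⁻¹ * ∑ t, expFrac N (-(k.val * t.val)) * v t := by
  simp only [mulVec, dotProduct, dft_apply_eq_expFrac, Finset.mul_sum, mul_assoc]

lemma conjTranspose_dft_mulVec_apply (U : Fin N → ℂ) (t : Fin N) :
    ((dft N)ᴴ *ᵥ U) t = (√(N : ℝ) : ℂ)⁻¹ * ∑ k, expFrac N (k.val * t.val) * U k := by
  simp only [mulVec, dotProduct, conjTranspose_apply, star_dft_apply, Finset.mul_sum, mul_assoc]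

lemma starRingEnd_dft_mulVec_ofReal (u : Fin N → ℝ) (k : Fin N) :
    starRingEnd ℂ ((dft N *ᵥ fun t => (u t : ℂ)) k) =
      (√(N : ℝ) : ℂ)⁻¹ * ∑ t, expFrac N (k.val * t.val) * u t := by
  simp only [dft_mulVec_apply, map_mul, map_inv₀, Complex.conj_ofReal, map_sum,
    starRingEnd_expFrac, neg_neg]

variable [NeZero N]

lemma conjTranspose_dft_mul_dft : (dft N)ᴴ * dft N = 1 := by
  ext a b
  have hN : (N : ℂ) ≠ 0 := Nat.cast_ne_zero.mpr (NeZero.ne N)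
  have hterm : ∀ k : Fin N, (dft N)ᴴ a k * dft N k b =
      (N : ℂ)⁻¹ * expFrac N (((a.val : ℤ) - b.val) * k.val) := fun k => by
    rw [conjTranspose_apply, star_dft_apply, dft_apply_eq_expFrac, ← ofReal_sqrt_inv_mul_self,
      mul_mul_mul_comm, ← expFrac_add]
    ring_nf
  have hdvd : (N : ℤ) ∣ (a.val : ℤ) - b.val ↔ a = b := by
    rw [natCast_dvd_sub_iff_eq_mod _ b.is_lt, Nat.mod_eq_of_lt a.is_lt, eq_comm, Fin.ext_iff]
  rw [mul_apply, one_apply, Finset.sum_congr rfl fun k _ => hterm k, ← Finset.mul_sum,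
    sum_expFrac_mul, if_congr hdvd rfl rfl]
  split_ifs
  · exact inv_mul_cancel₀ hN
  · exact mul_zero _

lemma dft_mul_conjTranspose_dft : dft N * (dft N)ᴴ = 1 :=
  mul_eq_one_comm.mp conjTranspose_dft_mul_dft

lemma eq_conjTranspose_dft_mulVec_iff {v U : Fin N → ℂ} :
    v = (dft N)ᴴ *ᵥ U ↔ dft N *ᵥ v = U := by
  constructor
  · rintro rfl
    rw [mulVec_mulVec, dft_mul_conjTranspose_dft, one_mulVec]
  · rintro rfl
    rw [mulVec_mulVec, conjTranspose_dft_mul_dft, one_mulVec]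

lemma starRingEnd_dft_mulVec_ofReal_eq_neg (u : Fin N → ℝ) (k : Fin N) :
    starRingEnd ℂ ((dft N *ᵥ fun t => (u t : ℂ)) k) = (dft N *ᵥ fun t => (u t : ℂ)) (-k) := by
  rw [starRingEnd_dft_mulVec_ofReal, dft_mulVec_apply]
  congr 1
  refine Finset.sum_congr rfl fun t _ => ?_
  rw [← starRingEnd_expFrac, expFrac_neg_val_mul, starRingEnd_expFrac, neg_neg]

lemma sum_expFrac_autocov_kernel {i : ℕ} (hi : i ≤ N) (t s : Fin N) :
    ∑ k : Fin N, expFrac N (((i : ℤ) + s.val - t.val) * k.val) =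
      if s = ⟨(t.val + (N - i)) % N, Nat.mod_lt _ t.pos⟩ then (N : ℂ) else 0 := by
  have hshift : (((t.val + (N - i) : ℕ) : ℤ) - s.val) = N - ((i : ℤ) + s.val - t.val) := by
    push_cast [Nat.cast_sub hi]
    ring
  rw [sum_expFrac_mul]
  refine if_congr ?_ rfl rfl
  rw [← dvd_sub_right (dvd_refl (N : ℤ)), ← hshift, natCast_dvd_sub_iff_eq_mod _ s.is_lt,
    Fin.ext_iff]

end dft

lemma Stilde_apply_eq_expFrac {N n : ℕ} (i : Fin n) (k : Fin N) :
    Stilde N n i k = expFrac N (i.val * k.val) := by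
  rw [Stilde, expFrac]
  push_cast
  ring_nf

lemma ofReal_Smat_apply {N n : ℕ} (i : Fin n) (k : Fin N) :
    (Smat N n i k : ℂ) = (expFrac N (i.val * k.val) + expFrac N (-(i.val * k.val))) / 2 := by
  rw [Smat, Complex.ofReal_cos, Complex.cos, expFrac, expFrac]
  push_cast
  ring_nf

theorem Stilde_mulVec_sq_norm_dft_mulVec {N n : ℕ} [NeZero N] (hnN : n ≤ N) (u : Fin N → ℝ) :
    Stilde N n *ᵥ (fun k => (‖(dft N *ᵥ fun t => (u t : ℂ)) k‖ : ℂ) ^ 2) =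
      fun i => (autocov N n u i : ℂ) := by
  funext i
  have hN : (N : ℂ) ≠ 0 := Nat.cast_ne_zero.mpr (NeZero.ne N)
  have hterm : ∀ k, Stilde N n i k * (‖(dft N *ᵥ fun t => (u t : ℂ)) k‖ : ℂ) ^ 2 = (N : ℂ)⁻¹ *
      ∑ t, ∑ s, (u t * u s : ℂ) * expFrac N ((i.val + s.val - t.val) * k.val) := by
    intro k
    have hexp : ∀ t s : Fin N, expFrac N (i.val * k.val) * (expFrac N (-(k.val * t.val)) *
        expFrac N (k.val * s.val)) = expFrac N ((i.val + s.val - t.val) * k.val) := by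
      intro t s
      rw [← expFrac_add, ← expFrac_add]
      ring_nf
    rw [← Complex.mul_conj', starRingEnd_dft_mulVec_ofReal, dft_mulVec_apply, mul_mul_mul_comm,
      ofReal_sqrt_inv_mul_self, Finset.sum_mul_sum, Stilde_apply_eq_expFrac, mul_left_comm,
      Finset.mul_sum]
    congr 1
    refine Finset.sum_congr rfl fun t _ => ?_
    rw [Finset.mul_sum]
    refine Finset.sum_congr rfl fun s _ => ?_
    linear_combination (u t * u s : ℂ) * hexp t s
  calc (Stilde N n *ᵥ fun k => (‖(dft N *ᵥ fun t => (u t : ℂ)) k‖ : ℂ) ^ 2) i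
      = (N : ℂ)⁻¹ * ∑ t, ∑ s, (u t * u s : ℂ) *
          ∑ k : Fin N, expFrac N ((i.val + s.val - t.val) * k.val) := by
        rw [mulVec, dotProduct, Finset.sum_congr rfl fun k _ => hterm k, ← Finset.mul_sum,
          Finset.sum_comm]
        refine congrArg _ (Finset.sum_congr rfl fun t _ => ?_)
        rw [Finset.sum_comm]
        simp only [Finset.mul_sum]
    _ = (autocov N n u i : ℂ) := by
        simp only [sum_expFrac_autocov_kernel (i.is_lt.le.trans hnN), mul_ite, mul_zero,
          Finset.sum_ite_eq', Finset.mem_univ, if_true, autocov, Finset.mul_sum]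
        push_cast
        refine Finset.sum_congr rfl fun t _ => ?_
        field_simp

/-- The spectrum `W̃ (W z)` of `W z`, see `dft_mulVec_ofReal_Wmat_mulVec`. -/
def hermSpectrum (N : ℕ) [NeZero N] (z : Fin N → ℝ) (k : Fin N) : ℂ :=
  if k.val = 0 ∨ 2 * k.val = N then z k
  else if 2 * k.val < N then ⟨z k / √2, -z (-k) / √2⟩
  else ⟨z (-k) / √2, z k / √2⟩

section hermSpectrum

variable {N : ℕ} [NeZero N]

lemma sq_norm_hermSpectrum (z : Fin N → ℝ) (k : Fin N) :
    ‖hermSpectrum N z k‖ ^ 2 = (z k ^ 2 + z (-k) ^ 2) / 2 := by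
  have h2 : √(2 : ℝ) ^ 2 = 2 := Real.sq_sqrt zero_le_two
  unfold hermSpectrum
  split_ifs with h0
  · rw [Fin.neg_eq_self_of_val_eq_zero_or h0, Complex.norm_real, Real.norm_eq_abs, sq_abs]
    ring
  all_goals
    rw [Complex.sq_norm, Complex.normSq_mk]
    field_simp
    rw [h2]
    ring

lemma Wmat_mul_eq_of_val_eq_zero_or (z : Fin N → ℝ) (t c : Fin N)
    (h : c.val = 0 ∨ 2 * c.val = N) :
    (Wmat N t c : ℂ) * z c =
      (√(N : ℝ) : ℂ)⁻¹ * (expFrac N (c.val * t.val) * hermSpectrum N z c) := by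
  have hzeta : (zeta N c t : ℂ) * Complex.I = 0 := by
    have hsym := expFrac_neg_val_mul c t.val
    rw [Fin.neg_eq_self_of_val_eq_zero_or h, ← starRingEnd_expFrac, expFrac_val_mul_val] at hsym
    simp only [map_add, map_mul, Complex.conj_ofReal, Complex.conj_I] at hsym
    linear_combination hsym / 2
  have hc : 2 * c.val ≤ N := by omega
  have hsqrt : (√(2 / (N : ℝ)) : ℂ) * (√(2 : ℝ) : ℂ)⁻¹ = (√(N : ℝ) : ℂ)⁻¹ := by
    rw [Real.sqrt_div zero_le_two]
    push_cast
    field_simp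
  rw [Wmat, if_pos hc, if_pos h, hermSpectrum, if_pos h, expFrac_val_mul_val]
  push_cast
  linear_combination (xi N c t * z c : ℂ) * hsqrt - ((√(N : ℝ) : ℂ)⁻¹ * z c) * hzeta

lemma Wmat_pair_of_two_mul_val_lt (z : Fin N → ℝ) (t c : Fin N) (h0 : c.val ≠ 0)
    (hlt : 2 * c.val < N) :
    (Wmat N t c : ℂ) * z c + (Wmat N t (-c) : ℂ) * z (-c) =
      (√(N : ℝ) : ℂ)⁻¹ * (expFrac N (c.val * t.val) * hermSpectrum N z c) +
        (√(N : ℝ) : ℂ)⁻¹ * (expFrac N ((-c : Fin N).val * t.val) *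
          hermSpectrum N z (-c)) := by
  have hneg := Fin.val_neg_of_val_ne_zero h0
  have hconj : expFrac N ((-c : Fin N).val * t.val) =
      (xi N c t : ℂ) - (zeta N c t : ℂ) * Complex.I := by
    rw [expFrac_neg_val_mul, ← starRingEnd_expFrac, expFrac_val_mul_val]
    simp only [map_add, map_mul, Complex.conj_ofReal, Complex.conj_I]
    ring
  have hsqrt : √(2 / (N : ℝ)) = √2 / √(N : ℝ) := Real.sqrt_div zero_le_two _
  have h2 : (√(2 : ℝ) : ℂ) * √2 = 2 := by
    rw [← Complex.ofReal_mul, Real.mul_self_sqrt zero_le_two, Complex.ofReal_ofNat]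
  have hN : (√(N : ℝ) : ℂ) ≠ 0 :=
    Complex.ofReal_ne_zero.mpr (Real.sqrt_ne_zero'.mpr (Nat.cast_pos.mpr (NeZero.pos N)))
  have hs2 : (√(2 : ℝ) : ℂ) ≠ 0 := Complex.ofReal_ne_zero.mpr (by positivity)
  rw [hconj, Wmat, if_pos hlt.le, if_neg (by omega), Wmat, if_neg (by omega), hneg,
    Nat.sub_sub_self (by omega), hermSpectrum, if_neg (by omega), if_pos hlt, hermSpectrum,
    if_neg (by omega), if_neg (by omega), neg_neg, expFrac_val_mul_val,
    Complex.mk_eq_add_mul_I, Complex.mk_eq_add_mul_I, hsqrt]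
  push_cast
  field_simp
  linear_combination (2 * (zeta N c t : ℂ) * z (-c)) * Complex.I_mul_I +
    ((xi N c t : ℂ) * z c + (zeta N c t : ℂ) * z (-c)) * h2

theorem ofReal_Wmat_mulVec (z : Fin N → ℝ) :
    (fun t => ((Wmat N *ᵥ z) t : ℂ)) = (dft N)ᴴ *ᵥ hermSpectrum N z := by
  funext t
  have hpair : ∀ c : Fin N, 2 * c.val ≤ N →
      (Wmat N t c : ℂ) * z c + (Wmat N t (-c) : ℂ) * z (-c) =
        (√(N : ℝ) : ℂ)⁻¹ * (expFrac N (c.val * t.val) * hermSpectrum N z c) +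
          (√(N : ℝ) : ℂ)⁻¹ * (expFrac N ((-c : Fin N).val * t.val) *
            hermSpectrum N z (-c)) := by
    intro c hc
    by_cases h : c.val = 0 ∨ 2 * c.val = N
    · rw [Fin.neg_eq_self_of_val_eq_zero_or h, Wmat_mul_eq_of_val_eq_zero_or z t c h]
    · exact Wmat_pair_of_two_mul_val_lt z t c (by omega) (by omega)
  rw [conjTranspose_dft_mulVec_apply, Finset.mul_sum]
  simp only [mulVec, dotProduct, Complex.ofReal_sum, Complex.ofReal_mul]
  refine Fintype.sum_eq_sum_of_add_comp_perm_eq (Equiv.neg (Fin N)) fun c => ?_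
  rcases le_or_gt (2 * c.val) N with hc | hc
  · exact hpair c hc
  · have := hpair (-c) (by rw [Fin.val_neg_of_val_ne_zero (by omega)]; omega)
    rw [neg_neg] at this
    exact (add_comm _ _).trans (this.trans (add_comm _ _))

lemma dft_mulVec_ofReal_Wmat_mulVec (z : Fin N → ℝ) :
    dft N *ᵥ (fun t => ((Wmat N *ᵥ z) t : ℂ)) = hermSpectrum N z :=
  eq_conjTranspose_dft_mulVec_iff.mp (ofReal_Wmat_mulVec z)

lemma Stilde_mulVec_sq_norm_hermSpectrum {n : ℕ} (z : Fin N → ℝ) :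
    Stilde N n *ᵥ (fun k => (‖hermSpectrum N z k‖ : ℂ) ^ 2) =
      fun i => ((Smat N n *ᵥ fun k => z k ^ 2) i : ℂ) := by
  funext i
  simp only [mulVec, dotProduct, Complex.ofReal_sum, Complex.ofReal_mul, Complex.ofReal_pow]
  refine Fintype.sum_eq_sum_of_add_comp_perm_eq (Equiv.neg (Fin N)) fun k => ?_
  have hneg : expFrac N (i.val * (-k : Fin N).val) = expFrac N (-(i.val * k.val)) := by
    rw [mul_comm, expFrac_neg_val_mul, mul_comm]
  have hneg' : expFrac N (-(i.val * (-k : Fin N).val)) = expFrac N (i.val * k.val) := by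
    rw [← starRingEnd_expFrac, hneg, starRingEnd_expFrac, neg_neg]
  have hnorm := sq_norm_hermSpectrum z k
  have hnorm' := sq_norm_hermSpectrum z (-k)
  rw [neg_neg] at hnorm'
  simp only [Equiv.neg_apply, Stilde_apply_eq_expFrac, ofReal_Smat_apply, hneg, hneg',
    ← Complex.ofReal_pow, hnorm, hnorm']
  push_cast
  ring

theorem autocov_Wmat_mulVec {n : ℕ} (hnN : n ≤ N) (z : Fin N → ℝ) :
    autocov N n (Wmat N *ᵥ z) = Smat N n *ᵥ fun k => z k ^ 2 := by
  funext i
  have h := congrFun (Stilde_mulVec_sq_norm_dft_mulVec hnN (Wmat N *ᵥ z)) i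
  rw [dft_mulVec_ofReal_Wmat_mulVec, Stilde_mulVec_sq_norm_hermSpectrum] at h
  exact Complex.ofReal_injective h.symm

lemma Wmat_mulVec_surjective : Function.Surjective (Wmat N).mulVec := by
  refine mulVec_surjective_iff_isUnit.mpr (mulVec_injective_iff_isUnit.mp ?_)
  refine (injective_iff_map_eq_zero (mulVecLin (Wmat N))).mpr fun z hz => ?_
  have hspec : hermSpectrum N z = 0 := by
    rw [← dft_mulVec_ofReal_Wmat_mulVec]
    simp only [mulVecLin_apply] at hz
    simp only [hz, Pi.zero_apply, Complex.ofReal_zero]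
    exact mulVec_zero _
  funext k
  have h := sq_norm_hermSpectrum z k
  rw [hspec, Pi.zero_apply, norm_zero] at h
  exact pow_eq_zero_iff two_ne_zero |>.mp (by nlinarith [sq_nonneg (z k), sq_nonneg (z (-k))])

end hermSpectrum

theorem autocov_eq_iff_exists_Wmat_mulVec {N n : ℕ} [NeZero N] (hnN : n ≤ N) (u : Fin N → ℝ)
    (r : Fin n → ℝ) :
    autocov N n u = r ↔ ∃ z : Fin N → ℝ, u = Wmat N *ᵥ z ∧ Smat N n *ᵥ (fun k => z k ^ 2) = r := by
  constructor
  · rintro rfl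
    obtain ⟨z, rfl⟩ := Wmat_mulVec_surjective u
    exact ⟨z, rfl, (autocov_Wmat_mulVec hnN z).symm⟩
  · rintro ⟨z, rfl, hz⟩
    rw [autocov_Wmat_mulVec hnN, hz]

theorem autocov_eq_iff_exists_hermitian_spectrum {N n : ℕ} [NeZero N] (hnN : n ≤ N)
    (u : Fin N → ℝ) (r : Fin n → ℝ) :
    autocov N n u = r ↔ ∃ U : Fin N → ℂ,
      (fun t => (u t : ℂ)) = (dft N)ᴴ *ᵥ U ∧
      (U ⟨0, NeZero.pos N⟩).im = 0 ∧
      (∀ k : Fin N, ∀ hk : 1 ≤ k.val,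
        U ⟨N - k.val, Nat.sub_lt k.pos hk⟩ = starRingEnd ℂ (U k)) ∧
      Stilde N n *ᵥ (fun k => (‖U k‖ : ℂ) ^ 2) = fun i => (r i : ℂ) := by
  constructor
  · rintro rfl
    refine ⟨_, eq_conjTranspose_dft_mulVec_iff.mpr rfl, ?_, fun k hk => ?_,
      Stilde_mulVec_sq_norm_dft_mulVec hnN u⟩
    · refine Complex.conj_eq_iff_im.mp ?_
      rw [starRingEnd_dft_mulVec_ofReal_eq_neg, Fin.neg_eq_self_of_val_eq_zero_or (Or.inl rfl)]
    · rw [starRingEnd_dft_mulVec_ofReal_eq_neg]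
      exact congrArg _ (Fin.ext (Fin.val_neg_of_val_ne_zero (by omega)).symm)
  · rintro ⟨U, hu, -, -, hS⟩
    rw [eq_conjTranspose_dft_mulVec_iff] at hu
    funext i
    rw [← hu, Stilde_mulVec_sq_norm_dft_mulVec hnN u] at hS
    exact Complex.ofReal_injective (congrFun hS i)

/-- for `r ∈ ℱ`, the inverse image `f⁻¹(r)`, the time-domain
inverse-embedding set, and the frequency-domain inverse-embedding set coincide. -/
theorem stmt5 (N n : ℕ) (hn : 1 ≤ n) (hNn : n ≤ N)
    (r : Fin n → ℝ) :
    ({u : Fin N → ℝ | autocov N n u = r} =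
      {u : Fin N → ℝ | ∃ z : Fin N → ℝ, u = (Wmat N).mulVec z ∧
        (Smat N n).mulVec (fun k => z k ^ 2) = r}) ∧
    ({u : Fin N → ℝ | autocov N n u = r} =
      {u : Fin N → ℝ | ∃ U : Fin N → ℂ,
        (fun t => (u t : ℂ)) = (dft N)ᴴ.mulVec U ∧
        (U ⟨0, by omega⟩).im = 0 ∧
        (∀ k : Fin N, ∀ hk : 1 ≤ k.val,
          U ⟨N - k.val, Nat.sub_lt k.pos hk⟩ = starRingEnd ℂ (U k)) ∧
        (Stilde N n).mulVec (fun k => ((‖U k‖ : ℂ) ^ 2)) =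
          fun i => (r i : ℂ)}) := by
  have : NeZero N := ⟨by omega⟩
  exact ⟨Set.ext fun u => autocov_eq_iff_exists_Wmat_mulVec hNn u r,
    Set.ext fun u => autocov_eq_iff_exists_hermitian_spectrum hNn u r⟩
end
end

section
/- Suppose N ≥ 2n and r ∈ ℱ. Then X̃(r) is nonempty and convex, and the dimension of its affine span is at most N/2 − n + 1 when N is even and at most (N+1)/2 − n when N is odd. -/
open scoped BigOperators
open Complex Matrix

noncomputable section

lemma aux_dvd_small {M d : ℤ} (hM : 0 < M) (hdvd : M ∣ d) (h1 : -M < d) (h2 : d < M) :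
    d = 0 := by
  obtain ⟨c, rfl⟩ := hdvd
  have hc1 : c ≤ 0 := by
    by_contra hcon; push_neg at hcon
    have : M * 1 ≤ M * c := mul_le_mul_of_nonneg_left (by omega) hM.le
    linarith
  have hc2 : 0 ≤ c := by
    by_contra hcon; push_neg at hcon
    have : M * c ≤ M * (-1) := mul_le_mul_of_nonneg_left (by omega) hM.le
    linarith
  have : c = 0 := le_antisymm hc1 hc2
  simp [this]

lemma zeta_zpow (N : ℕ) (m : ℤ) :
    Complex.exp (2*Real.pi*Complex.I/N) ^ m
      = Complex.exp (((2*Real.pi/N*m : ℝ) : ℂ) * Complex.I) := by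
  rw [← Complex.exp_int_mul]; congr 1; push_cast; ring

lemma zeta_re (N : ℕ) (m : ℤ) :
    (Complex.exp (2*Real.pi*Complex.I/N) ^ m).re = Real.cos (2*Real.pi/N*m) := by
  rw [zeta_zpow]; exact Complex.exp_ofReal_mul_I_re _

lemma zeta_sum (N : ℕ) (hN : 0 < N) (m : ℤ) :
    ∑ k : Fin N, Complex.exp (2*Real.pi*Complex.I/N) ^ (m * (k : ℕ)) =
      if (N:ℤ) ∣ m then (N:ℂ) else 0 := by
  have hprim := Complex.isPrimitiveRoot_exp N hN.ne'
  set ζ := Complex.exp (2*Real.pi*Complex.I/N) with hζ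
  have hsum : ∑ k : Fin N, ζ ^ (m * (k : ℕ)) = ∑ k ∈ Finset.range N, (ζ^m)^k := by
    rw [← Fin.sum_univ_eq_sum_range (fun i => (ζ^m)^i) N]
    refine Finset.sum_congr rfl fun k _ => ?_
    rw [_root_.zpow_mul, zpow_natCast]
  rw [hsum]
  split_ifs with h
  · have h1 : ζ^m = 1 := (hprim.zpow_eq_one_iff_dvd m).2 h
    simp [h1]
  · have h1 : ζ^m ≠ 1 := fun hh => h ((hprim.zpow_eq_one_iff_dvd m).1 hh)
    rw [geom_sum_eq h1]
    have h2 : (ζ^m)^N = 1 := by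
      rw [← zpow_natCast, ← _root_.zpow_mul, mul_comm, _root_.zpow_mul, zpow_natCast,
        hprim.pow_eq_one, _root_.one_zpow]
    simp [h2]

lemma cos_sum (N : ℕ) (hN : 0 < N) (m : ℤ) :
    ∑ k : Fin N, Real.cos (2*Real.pi/N*m*(k : ℕ)) = if (N:ℤ) ∣ m then (N:ℝ) else 0 := by
  calc ∑ k : Fin N, Real.cos (2*Real.pi/N*m*(k : ℕ))
      = ∑ k : Fin N, (Complex.exp (2*Real.pi*Complex.I/N) ^ (m * (k : ℕ))).re := by
        refine Finset.sum_congr rfl fun k _ => ?_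
        rw [zeta_re]; congr 1; push_cast; ring
    _ = (if (N:ℤ) ∣ m then (N:ℂ) else 0).re := by rw [← Complex.re_sum, zeta_sum N hN m]
    _ = if (N:ℤ) ∣ m then (N:ℝ) else 0 := by split_ifs <;> simp

lemma zeta_zpow_congr (N : ℕ) (hN : 0 < N) {a b : ℤ} (h : (N:ℤ) ∣ a - b) :
    Complex.exp (2*Real.pi*Complex.I/N) ^ a = Complex.exp (2*Real.pi*Complex.I/N) ^ b := by
  obtain ⟨c, hc⟩ := h
  have ha : a = b + (N:ℤ) * c := by linarith
  rw [ha, zpow_add₀ (Complex.exp_ne_zero _), _root_.zpow_mul, zpow_natCast,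
    (Complex.isPrimitiveRoot_exp N hN.ne').pow_eq_one, _root_.one_zpow, mul_one]

lemma dvd_char (N i t s : ℕ) (hN : 0 < N) (hi : i ≤ N) (ht : t < N) (hs : s < N) :
    ((N:ℤ) ∣ ((i:ℤ) - t + s)) ↔ s = (t + (N - i)) % N := by
  have hmod : (t + (N - i)) % N = if i ≤ t then t - i else t + (N - i) := by
    split_ifs with h
    · have h1 : t + (N - i) = (t - i) + N := by omega
      rw [h1, Nat.add_mod_right, Nat.mod_eq_of_lt (by omega)]
    · exact Nat.mod_eq_of_lt (by omega)
  rw [hmod]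
  constructor
  · rintro ⟨c, hc⟩
    have hN' : (0:ℤ) < N := by exact_mod_cast hN
    have hc2 : c = 0 ∨ c = 1 := by
      have h1 : c ≤ 1 := by
        by_contra hcon; push_neg at hcon
        have h3 : (N:ℤ)*2 ≤ N*c := mul_le_mul_of_nonneg_left (by omega) hN'.le
        have h4 : (i:ℤ) - t + s < 2*N := by omega
        linarith
      have h2 : 0 ≤ c := by
        by_contra hcon; push_neg at hcon
        have h3 : (N:ℤ)*c ≤ N*(-1) := mul_le_mul_of_nonneg_left (by omega) hN'.le
        have h4 : -(N:ℤ) < (i:ℤ) - t + s := by omega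
        linarith
      omega
    rcases hc2 with rfl|rfl <;> split_ifs with h <;> omega
  · intro h
    split_ifs at h with hle
    · exact ⟨0, by omega⟩
    · exact ⟨1, by omega⟩

lemma cos_orth (N n : ℕ) (h2n : 2*n ≤ N) (i m : Fin n) :
    ∑ k : Fin N, Real.cos (2*Real.pi/N*i.val*k.val) * Real.cos (2*Real.pi/N*m.val*k.val)
      = if i = m then (if i.val = 0 then (N:ℝ) else N/2) else 0 := by
  have hN : 0 < N := by have := i.pos; omega
  have hNZ : (0:ℤ) < N := by exact_mod_cast hN
  have key : ∀ k : Fin N,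
      Real.cos (2*Real.pi/N*i.val*k.val) * Real.cos (2*Real.pi/N*m.val*k.val)
      = Real.cos (2*Real.pi/N*(((i.val:ℤ)+m.val):ℤ)*(k:ℕ))/2
        + Real.cos (2*Real.pi/N*(((i.val:ℤ)-m.val):ℤ)*(k:ℕ))/2 := by
    intro k
    rw [show (2*Real.pi/N*(((i.val:ℤ)+m.val):ℤ)*(k:ℕ) : ℝ)
        = 2*Real.pi/N*i.val*k.val + 2*Real.pi/N*m.val*k.val by push_cast; ring,
      show (2*Real.pi/N*(((i.val:ℤ)-m.val):ℤ)*(k:ℕ) : ℝ)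
        = 2*Real.pi/N*i.val*k.val - 2*Real.pi/N*m.val*k.val by push_cast; ring,
      Real.cos_add, Real.cos_sub]
    ring
  rw [Finset.sum_congr rfl (fun k _ => key k), Finset.sum_add_distrib,
    ← Finset.sum_div, ← Finset.sum_div, cos_sum N hN _, cos_sum N hN _]
  have hi := i.isLt
  have hm := m.isLt
  by_cases him : i = m
  · subst him
    by_cases hi0 : i.val = 0
    · rw [if_pos (by simp [hi0]), if_pos (by simp), if_pos rfl, if_pos hi0]
      ring
    · rw [if_neg (fun hd => hi0 (by
          have := aux_dvd_small hNZ hd (by omega) (by omega); omega)),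
        if_pos (by simp), if_pos rfl, if_neg hi0]
      ring
  · have hvals : i.val ≠ m.val := fun h => him (Fin.ext h)
    rw [if_neg (fun hd => hvals (by
        have := aux_dvd_small hNZ hd (by omega) (by omega); omega)),
      if_neg (fun hd => hvals (by
        have := aux_dvd_small hNZ hd (by omega) (by omega); omega)),
      if_neg him]
    ring

lemma xset_convex (N n : ℕ) (r : Fin n → ℝ) : Convex ℝ (Xset N n r) := by
  rintro x ⟨hx1, hx2, hx3⟩ y ⟨hy1, hy2, hy3⟩ a b ha hb hab
  refine ⟨?_, fun k => ?_, fun k hk => ?_⟩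
  · have hvec : (fun k => (((a • x + b • y) k : ℝ) : ℂ))
        = (a:ℂ) • (fun k => ((x k : ℝ):ℂ)) + (b:ℂ) • fun k => ((y k : ℝ):ℂ) := by
      funext k
      simp only [Pi.add_apply, Pi.smul_apply, smul_eq_mul]
      push_cast; ring
    rw [hvec, Matrix.mulVec_add, Matrix.mulVec_smul, Matrix.mulVec_smul, hx1, hy1]
    funext i
    simp only [Pi.add_apply, Pi.smul_apply, smul_eq_mul]
    have hab' : (a:ℂ) + b = 1 := by exact_mod_cast congrArg (fun t : ℝ => (t:ℂ)) hab
    linear_combination (r i : ℂ) * hab'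
  · simp only [Pi.add_apply, Pi.smul_apply, smul_eq_mul]
    exact add_nonneg (mul_nonneg ha (hx2 k)) (mul_nonneg hb (hy2 k))
  · simp only [Pi.add_apply, Pi.smul_apply, smul_eq_mul, hx3 k hk, hy3 k hk]

lemma xset_dim_le (N n : ℕ) (hn : 1 ≤ n) (h2n : 2 * n ≤ N) (r : Fin n → ℝ) :
    Module.finrank ℝ (vectorSpan ℝ (Xset N n r)) ≤ N / 2 + 1 - n := by
  have hN : 0 < N := by omega
  have hNR : (N:ℝ) ≠ 0 := Nat.cast_ne_zero.2 hN.ne'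
  set K := N / 2 + 1 with hK
  have hgdef : ∀ k : Fin N, min k.val (N - k.val) < K := by
    intro k; have := k.isLt; omega
  set g : Fin N → Fin K := fun k => ⟨min k.val (N - k.val), hgdef k⟩ with hg
  set e : Fin K → Fin N := fun q => ⟨q.val, by have := q.isLt; omega⟩ with he
  set P : (Fin K → ℝ) →ₗ[ℝ] (Fin N → ℝ) := LinearMap.funLeft ℝ ℝ g with hP
  set φ : (Fin N → ℝ) →ₗ[ℝ] (Fin n → ℝ) := (Smat N n).mulVecLin with hφ
  set ψ := φ ∘ₗ P with hψ
  have hrep : ∀ x ∈ Xset N n r, P (fun q => x (e q)) = x := by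
    intro x hx
    funext k
    show x (e (g k)) = x k
    rcases le_or_gt k.val (N - k.val) with h|h
    · congr 1
      apply Fin.ext
      simp only [he, hg]
      omega
    · have hk1 : 1 ≤ k.val := by have := k.isLt; omega
      have hsym := hx.2.2 k hk1
      have heg : e (g k) = (⟨N - k.val, Nat.sub_lt k.pos hk1⟩ : Fin N) := by
        apply Fin.ext
        simp only [he, hg]
        omega
      rw [heg]
      exact hsym.symm
  have hphi : ∀ x ∈ Xset N n r, φ x = r := by
    intro x hx
    funext i
    have h1 := congrFun hx.1 i
    have h2 := congrArg Complex.re h1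
    simp only [Matrix.mulVec, dotProduct, Complex.re_sum] at h2
    show ∑ k, Smat N n i k * x k = r i
    rw [show (((fun i => ((r i : ℝ):ℂ)) i : ℂ)).re = r i from by simp] at h2
    rw [← h2]
    refine Finset.sum_congr rfl fun k _ => ?_
    have hS : Stilde N n i k = Complex.exp (((2*Real.pi/N*i.val*k.val : ℝ):ℂ) * Complex.I) := by
      unfold Stilde; congr 1; push_cast; ring
    rw [hS, Complex.mul_re]
    simp only [Complex.ofReal_im, Complex.ofReal_re, mul_zero, sub_zero,
      Complex.exp_ofReal_mul_I_re]
    rfl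
  have hspan : vectorSpan ℝ (Xset N n r) ≤ Submodule.map P (LinearMap.ker ψ) := by
    rw [vectorSpan_def, Submodule.span_le]
    rintro v ⟨x, hx, y, hy, rfl⟩
    refine ⟨(fun q => x (e q)) - (fun q => y (e q)), ?_, ?_⟩
    · have hker : ψ ((fun q => x (e q)) - fun q => y (e q)) = 0 := by
        rw [map_sub]
        simp only [hψ, LinearMap.comp_apply]
        rw [hrep x hx, hrep y hy, hphi x hx, hphi y hy, sub_self]
      exact LinearMap.mem_ker.2 hker
    · rw [map_sub, hrep x hx, hrep y hy]
      rfl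
  have hsurj : Function.Surjective ψ := by
    intro y
    set c : Fin n → ℝ := fun m => (if m.val = 0 then 1 else 2) * y m / N with hc
    set w : Fin K → ℝ := fun q => ∑ m : Fin n, c m * Real.cos (2*Real.pi/N*m.val*q.val)
      with hw
    have hPw : ∀ k : Fin N, P w k = ∑ m : Fin n, c m * Real.cos (2*Real.pi/N*m.val*k.val) := by
      intro k
      show w (g k) = _
      refine Finset.sum_congr rfl fun m _ => ?_
      congr 1
      rcases le_or_gt k.val (N - k.val) with h|h
      · have hgk : (g k).val = k.val := by simp only [hg]; omega
        rw [hgk]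
      · have hgk : (g k).val = N - k.val := by simp only [hg]; omega
        have hcast : (((g k).val : ℕ):ℝ) = (N:ℝ) - k.val := by
          rw [hgk, Nat.cast_sub k.isLt.le]
        rw [show (2*Real.pi/N*m.val*((g k).val:ℝ) : ℝ)
            = (m.val:ℝ)*(2*Real.pi) - 2*Real.pi/N*m.val*k.val from by
          rw [hcast]; field_simp]
        rw [Real.cos_nat_mul_two_pi_sub]
    refine ⟨w, ?_⟩
    funext i
    show φ (P w) i = y i
    have hφPw : φ (P w) i = ∑ k, Smat N n i k * P w k := by
      simp [hφ, Matrix.mulVecLin_apply, Matrix.mulVec, dotProduct]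
    rw [hφPw]
    calc ∑ k, Smat N n i k * P w k
        = ∑ m : Fin n, c m * ∑ k : Fin N,
            Real.cos (2*Real.pi/N*i.val*k.val) * Real.cos (2*Real.pi/N*m.val*k.val) := by
          simp only [hPw, Finset.mul_sum]
          rw [Finset.sum_comm]
          refine Finset.sum_congr rfl fun m _ => ?_
          refine Finset.sum_congr rfl fun k _ => ?_
          show Smat N n i k * (c m * _) = c m * (_ * _)
          unfold Smat
          ring
      _ = ∑ m : Fin n, c m * (if i = m then (if i.val = 0 then (N:ℝ) else N/2) else 0) := by
          refine Finset.sum_congr rfl fun m _ => ?_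
          rw [cos_orth N n h2n i m]
      _ = y i := by
          rw [Finset.sum_eq_single i]
          · by_cases hi0 : i.val = 0 <;> simp only [if_pos rfl, hi0, hc, if_pos, if_neg, if_false] <;>
              field_simp
          · intro m _ hmi
            rw [if_neg (fun h => hmi h.symm), mul_zero]
          · intro h
            exact absurd (Finset.mem_univ i) h
  have hrank : Module.finrank ℝ (LinearMap.ker ψ) + n = K := by
    have h1 := LinearMap.finrank_range_add_finrank_ker ψ
    rw [LinearMap.range_eq_top.2 hsurj] at h1
    rw [finrank_top, Module.finrank_pi, Module.finrank_pi] at h1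
    simp only [Fintype.card_fin] at h1
    omega
  calc Module.finrank ℝ (vectorSpan ℝ (Xset N n r))
      ≤ Module.finrank ℝ (Submodule.map P (LinearMap.ker ψ)) := Submodule.finrank_mono hspan
    _ ≤ Module.finrank ℝ (LinearMap.ker ψ) := Submodule.finrank_map_le P _
    _ ≤ N/2 + 1 - n := by omega

lemma xset_nonempty (N n : ℕ) (hn : 1 ≤ n) (h2n : 2*n ≤ N) (u : Fin N → ℝ) :
    (Xset N n (autocov N n u)).Nonempty := by
  have hN : 0 < N := by omega
  have hNC : (N:ℂ) ≠ 0 := Nat.cast_ne_zero.2 hN.ne'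
  set ζ : ℂ := Complex.exp (2*Real.pi*Complex.I/N) with hζ
  have hζ0 : ζ ≠ 0 := Complex.exp_ne_zero _
  set B : Fin N → ℂ := fun k => ∑ t : Fin N, (u t : ℂ) * ζ ^ (-((k.val:ℤ) * t.val)) with hB
  set x : Fin N → ℝ := fun k => (N:ℝ)⁻¹ * Complex.normSq (B k) with hx
  have hconjzeta : ∀ m : ℤ, (starRingEnd ℂ) (ζ ^ m) = ζ ^ (-m) := by
    intro m
    have hcz : (starRingEnd ℂ) ζ = ζ⁻¹ := by
      rw [hζ, ← Complex.exp_conj, ← Complex.exp_neg]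
      rw [show ((2:ℂ)*Real.pi*Complex.I/N) = ((2:ℂ)*(Real.pi:ℂ))*Complex.I/(N:ℂ) by ring]
      rw [map_div₀, _root_.map_mul, _root_.map_mul, Complex.conj_I, Complex.conj_ofReal,
        map_ofNat, map_natCast]
      ring
    rw [map_zpow₀, hcz, _root_.inv_zpow, ← _root_.zpow_neg]
  have hconjB : ∀ k : Fin N,
      (starRingEnd ℂ) (B k) = ∑ t : Fin N, (u t : ℂ) * ζ ^ ((k.val:ℤ) * t.val) := by
    intro k
    rw [hB, map_sum]
    refine Finset.sum_congr rfl fun t _ => ?_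
    rw [_root_.map_mul, Complex.conj_ofReal, hconjzeta, neg_neg]
  refine ⟨x, ?_, fun k => mul_nonneg (by positivity) (Complex.normSq_nonneg _), ?_⟩
  · -- the linear constraints
    funext i
    have hSt : ∀ k : Fin N, Stilde N n i k = ζ ^ ((i.val:ℤ) * k.val) := by
      intro k; rw [hζ, zeta_zpow]; unfold Stilde; congr 1; push_cast; ring
    have hxk : ∀ k : Fin N, ((x k : ℝ):ℂ) = (N:ℂ)⁻¹ * (B k * (starRingEnd ℂ) (B k)) := by
      intro k
      simp only [hx]
      push_cast
      rw [Complex.mul_conj]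
    show (Stilde N n).mulVec (fun k => (x k : ℂ)) i = ((autocov N n u i : ℝ) : ℂ)
    simp only [Matrix.mulVec, dotProduct]
    calc ∑ k : Fin N, Stilde N n i k * ((x k : ℝ):ℂ)
        = ∑ k : Fin N, ∑ t : Fin N, ∑ s : Fin N,
            (N:ℂ)⁻¹ * ((u t : ℂ) * u s *
              ζ ^ (((i.val:ℤ) - t.val + s.val) * (k:ℕ))) := by
          refine Finset.sum_congr rfl fun k _ => ?_
          rw [hSt k, hxk k, hconjB k, hB, Finset.sum_mul_sum]
          simp only [Finset.mul_sum]
          refine Finset.sum_congr rfl fun t _ => ?_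
          refine Finset.sum_congr rfl fun s _ => ?_
          rw [show (((i.val:ℤ) - t.val + s.val) * (k:ℕ) : ℤ)
              = (-((k.val:ℤ) * t.val)) + ((k.val:ℤ) * s.val) + (i.val:ℤ) * k.val by
            push_cast; ring]
          rw [zpow_add₀ hζ0, zpow_add₀ hζ0]
          ring
      _ = ∑ t : Fin N, ∑ s : Fin N,
            (N:ℂ)⁻¹ * ((u t : ℂ) * u s *
              ∑ k : Fin N, ζ ^ (((i.val:ℤ) - t.val + s.val) * (k:ℕ))) := by
          rw [Finset.sum_comm]
          refine Finset.sum_congr rfl fun t _ => ?_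
          rw [Finset.sum_comm]
          refine Finset.sum_congr rfl fun s _ => ?_
          rw [Finset.mul_sum, Finset.mul_sum]
      _ = ∑ t : Fin N, (u t : ℂ) * u ⟨(t.val + (N - i.val)) % N, Nat.mod_lt _ t.pos⟩ := by
          refine Finset.sum_congr rfl fun t _ => ?_
          have hi : i.val ≤ N := by have := i.isLt; omega
          calc ∑ s : Fin N, (N:ℂ)⁻¹ * ((u t : ℂ) * u s *
                  ∑ k : Fin N, ζ ^ (((i.val:ℤ) - t.val + s.val) * (k:ℕ)))
              = ∑ s : Fin N, (if s = (⟨(t.val + (N - i.val)) % N, Nat.mod_lt _ t.pos⟩ : Fin N)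
                  then (N:ℂ)⁻¹ * ((u t : ℂ) * u s * N) else 0) := by
                refine Finset.sum_congr rfl fun s _ => ?_
                rw [hζ, zeta_sum N hN ((i.val:ℤ) - t.val + s.val)]
                have hcond : ((N:ℤ) ∣ ((i.val:ℤ) - t.val + s.val))
                    ↔ s = (⟨(t.val + (N - i.val)) % N, Nat.mod_lt _ t.pos⟩ : Fin N) := by
                  rw [dvd_char N i.val t.val s.val hN hi t.isLt s.isLt, Fin.ext_iff]
                by_cases h : s = (⟨(t.val + (N - i.val)) % N, Nat.mod_lt _ t.pos⟩ : Fin N)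
                · rw [if_pos (hcond.2 h), if_pos h]
                · rw [if_neg (fun hd => h (hcond.1 hd)), if_neg h, mul_zero, mul_zero]
            _ = (N:ℂ)⁻¹ * ((u t : ℂ) * u ⟨(t.val + (N - i.val)) % N, Nat.mod_lt _ t.pos⟩ * N) := by
                rw [Finset.sum_ite_eq' Finset.univ]
                rw [if_pos (Finset.mem_univ _)]
            _ = (u t : ℂ) * u ⟨(t.val + (N - i.val)) % N, Nat.mod_lt _ t.pos⟩ := by
                field_simp
      _ = ((autocov N n u i : ℝ) : ℂ) := by
          unfold autocov
          push_cast
          rfl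
  · -- symmetry
    intro k hk
    show x k = x ⟨N - k.val, Nat.sub_lt k.pos hk⟩
    have hBsym : B ⟨N - k.val, Nat.sub_lt k.pos hk⟩ = (starRingEnd ℂ) (B k) := by
      rw [hconjB, hB]
      refine Finset.sum_congr rfl fun t _ => ?_
      congr 1
      apply zeta_zpow_congr N hN
      refine ⟨-(t.val:ℤ), ?_⟩
      have hkN : k.val ≤ N := k.isLt.le
      push_cast [Nat.cast_sub hkN]
      ring
    simp only [hx]
    rw [hBsym, Complex.normSq_conj]

/-- for `N ≥ 2n` and `r ∈ ℱ`, the set `X̃(r)` is nonempty and convex,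
and the dimension of its affine span is at most `N/2 - n + 1` for even `N`
and at most `(N+1)/2 - n` for odd `N`. -/
theorem stmt6 (N n : ℕ) (hn : 1 ≤ n) (h2n : 2 * n ≤ N) (C : ℝ) (hC : 0 < C)
    (r : Fin n → ℝ) (hr : r ∈ Fset N n C) :
    (Xset N n r).Nonempty ∧ Convex ℝ (Xset N n r) ∧
    Module.finrank ℝ (vectorSpan ℝ (Xset N n r)) ≤
      (if Even N then N / 2 - n + 1 else (N + 1) / 2 - n) := by
  obtain ⟨u, -, hru⟩ := hr
  subst hru
  refine ⟨xset_nonempty N n hn h2n u, xset_convex N n _, ?_⟩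
  have h := xset_dim_le N n hn h2n (autocov N n u)
  rcases Nat.even_or_odd N with he|ho
  · rw [if_pos he]
    obtain ⟨m, rfl⟩ := he
    omega
  · rw [if_neg (Nat.not_even_iff_odd.2 ho)]
    obtain ⟨m, rfl⟩ := ho
    omega
end
end

section
/- Suppose N is even, N ≥ 2n, r ∈ ℱ, and let x* be any element of X̃(r). Then {x ∈ ℝ^N : S̃x = r and x_k = x_{N−k} for 1 ≤ k ≤ N−1} = {x* + Σ_{m=n}^{N/2} c_m ξ_m : c_n, …, c_{N/2} ∈ ℝ}, and the vectors ξ_n, …, ξ_{N/2} are linearly independent over ℝ; hence this solution set is an affine subspace of ℝ^N of dimension N/2 − n + 1. -/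
open scoped BigOperators
open Complex Matrix

noncomputable section

/-! The vectors `ξ_0, …, ξ_{N/2}` are pairwise orthogonal, because by the product-to-sum formula
their inner products are sums of nontrivial `N`-th roots of unity (`a ± b` is never a multiple of
`N` for distinct `a, b ≤ N/2`), and `ξ_m 0 = 1`; so they are linearly independent. They lie in the
space of even signals `x k = x (N - k)`, which has dimension at most `N/2 + 1` because an even
signal is determined by its first half; hence they form a basis of it. For an even signal `y`,
`Re (S̃ y)_i = ⟨y, ξ_i⟩`, so `S̃ y = 0` kills the coefficients of `ξ_0, …, ξ_{n-1}`, while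
`S̃ ξ_m = 0` for `n ≤ m ≤ N/2` by the same root-of-unity sums. Thus the homogeneous solutions are
exactly `span {ξ_n, …, ξ_{N/2}}`, and the solution set is the affine subspace through `x*` with
this direction. -/

section Trigonometry

lemma sum_exp_eq_zero_of_not_dvd {N : ℕ} (hN : 0 < N) {ℓ : ℤ} (hℓ : ¬(N : ℤ) ∣ ℓ) :
    ∑ k : Fin N, Complex.exp (Complex.I * (2 * Real.pi / N) * ℓ * k) = 0 := by
  have hprim := Complex.isPrimitiveRoot_exp N hN.ne'
  set ζ := Complex.exp (2 * Real.pi * Complex.I / N) ^ ℓ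
  have hζ : ζ ≠ 1 := fun h => hℓ ((hprim.zpow_eq_one_iff_dvd ℓ).1 h)
  have hζN : ζ ^ N = 1 := by
    rw [← zpow_natCast, ← _root_.zpow_mul, mul_comm ℓ, _root_.zpow_mul, zpow_natCast,
      hprim.pow_eq_one, _root_.one_zpow]
  have hterm : ∀ k : ℕ, Complex.exp (Complex.I * (2 * Real.pi / N) * ℓ * k) = ζ ^ k := by
    intro k
    simp only [ζ, ← Complex.exp_int_mul, ← Complex.exp_nat_mul]
    ring_nf
  simp only [hterm]
  rw [Fin.sum_univ_eq_sum_range (ζ ^ ·), geom_sum_eq hζ, hζN, sub_self, zero_div]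

lemma not_int_dvd_add_and_not_int_dvd_sub {N a b : ℕ} (hab : a ≠ b) (ha : 2 * a ≤ N)
    (hb : 2 * b ≤ N) : ¬(N : ℤ) ∣ a + b ∧ ¬(N : ℤ) ∣ a - b := by
  constructor <;> intro h <;> have := Int.eq_zero_of_abs_lt_dvd h (by rw [abs_lt]; omega) <;> omega

lemma sum_exp_mul_cos_eq_zero {N a b : ℕ} (hN : 0 < N) (hab : a ≠ b) (ha : 2 * a ≤ N)
    (hb : 2 * b ≤ N) :
    ∑ k : Fin N, Complex.exp (Complex.I * (2 * Real.pi / N) * a * k) *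
      (Real.cos (k * b * (2 * Real.pi / N)) : ℂ) = 0 := by
  obtain ⟨hadd, hsub⟩ := not_int_dvd_add_and_not_int_dvd_sub hab ha hb
  have hterm : ∀ k : Fin N, Complex.exp (Complex.I * (2 * Real.pi / N) * a * k) *
      (Real.cos (k * b * (2 * Real.pi / N)) : ℂ) =
      (Complex.exp (Complex.I * (2 * Real.pi / N) * ((a + b : ℤ) : ℂ) * k) +
        Complex.exp (Complex.I * (2 * Real.pi / N) * ((a - b : ℤ) : ℂ) * k)) / 2 := by
    intro k
    rw [Complex.ofReal_cos, Complex.cos, mul_div_assoc', mul_add, ← Complex.exp_add,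
      ← Complex.exp_add]
    push_cast
    ring_nf
  rw [Finset.sum_congr rfl fun k _ => hterm k, ← Finset.sum_div, Finset.sum_add_distrib,
    sum_exp_eq_zero_of_not_dvd hN hadd, sum_exp_eq_zero_of_not_dvd hN hsub, add_zero, zero_div]

end Trigonometry

section Orthogonality

variable {K ι m : Type*} [Field K] [Fintype m] {v : ι → m → K} {s : Finset ι}

lemma sum_smul_dotProduct_of_orthogonal (c : ι → K) {j : ι} (hj : j ∈ s)
    (horth : ∀ i ∈ s, i ≠ j → v i ⬝ᵥ v j = 0) :
    (∑ i ∈ s, c i • v i) ⬝ᵥ v j = c j * (v j ⬝ᵥ v j) := by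
  rw [sum_dotProduct, Finset.sum_eq_single_of_mem j hj fun i hi hij => by
    rw [smul_dotProduct, horth i hi hij, smul_zero], smul_dotProduct, smul_eq_mul]

lemma linearIndepOn_of_dotProduct_eq_zero (horth : ∀ i ∈ s, ∀ j ∈ s, i ≠ j → v i ⬝ᵥ v j = 0)
    (hself : ∀ i ∈ s, v i ⬝ᵥ v i ≠ 0) : LinearIndepOn K v (s : Set ι) := by
  rw [linearIndepOn_finset_iff]
  intro c hc j hj
  have h := sum_smul_dotProduct_of_orthogonal c hj fun i hi hij => horth i hi j hj hij
  rw [hc, zero_dotProduct, eq_comm, mul_eq_zero] at h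
  exact h.resolve_right (hself j hj)

end Orthogonality

def evenSignals (N : ℕ) : Submodule ℝ (Fin N → ℝ) where
  carrier := {x | ∀ k : Fin N, ∀ hk : 1 ≤ k.val, x k = x ⟨N - k.val, Nat.sub_lt k.pos hk⟩}
  add_mem' ha hb k hk := by simp only [Pi.add_apply, ha k hk, hb k hk]
  zero_mem' _ _ := rfl
  smul_mem' c x hx k hk := by simp only [Pi.smul_apply, hx k hk]

def realStilde (N n : ℕ) : (Fin N → ℝ) →ₗ[ℝ] Fin n → ℂ :=
  (Stilde N n).mulVecLin.restrictScalars ℝ ∘ₗ Complex.ofRealAm.toLinearMap.compLeft (Fin N)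

lemma realStilde_apply {N n : ℕ} (x : Fin N → ℝ) :
    realStilde N n x = Stilde N n *ᵥ fun k => (x k : ℂ) := rfl

section Xi

variable {N : ℕ}

lemma dotProduct_xi_eq_re (y : Fin N → ℝ) (a : ℕ) :
    y ⬝ᵥ xi N a =
      (∑ k : Fin N, Complex.exp (Complex.I * (2 * Real.pi / N) * a * k) * (y k : ℂ)).re := by
  rw [Complex.re_sum]
  refine Finset.sum_congr rfl fun k _ => ?_
  rw [show Complex.I * (2 * Real.pi / N) * a * k = ((k * a * (2 * Real.pi / N) : ℝ) : ℂ) * Complex.I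
    by push_cast; ring, Complex.re_mul_ofReal, Complex.exp_ofReal_mul_I_re, xi, mul_comm]

lemma re_realStilde_apply {n : ℕ} (y : Fin N → ℝ) (i : Fin n) :
    (realStilde N n y i).re = y ⬝ᵥ xi N i :=
  (dotProduct_xi_eq_re y i).symm

lemma realStilde_xi {n m : ℕ} (hN : 0 < N) (hnm : n ≤ m) (hm : 2 * m ≤ N) :
    realStilde N n (xi N m) = 0 := by
  ext1 i
  exact sum_exp_mul_cos_eq_zero hN (by have := i.isLt; omega) (by have := i.isLt; omega) hm

lemma xi_dotProduct_xi {a b : ℕ} (hN : 0 < N) (hab : a ≠ b) (ha : 2 * a ≤ N) (hb : 2 * b ≤ N) :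
    xi N a ⬝ᵥ xi N b = 0 := by
  rw [dotProduct_xi_eq_re]
  simp only [xi]
  rw [sum_exp_mul_cos_eq_zero hN hab.symm hb ha, Complex.zero_re]

lemma xi_dotProduct_self_pos (hN : 0 < N) (m : ℕ) : 0 < xi N m ⬝ᵥ xi N m := by
  have h0 : xi N m ⟨0, hN⟩ * xi N m ⟨0, hN⟩ = 1 := by simp [xi]
  calc (0 : ℝ) < xi N m ⟨0, hN⟩ * xi N m ⟨0, hN⟩ := by rw [h0]; exact one_pos
    _ ≤ xi N m ⬝ᵥ xi N m :=
      Finset.single_le_sum (fun k _ => mul_self_nonneg (xi N m k)) (Finset.mem_univ _)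

lemma xi_mem_evenSignals (m : ℕ) : xi N m ∈ evenSignals N := by
  intro k hk
  simp only [xi]
  rw [Nat.cast_sub k.isLt.le, ← Real.cos_nat_mul_two_pi_sub _ m]
  have : (N : ℝ) ≠ 0 := by have := k.pos; positivity
  congr 1
  field_simp

lemma linearIndepOn_xi (hN : 0 < N) {s : Finset ℕ} (hs : ∀ m ∈ s, 2 * m ≤ N) :
    LinearIndepOn ℝ (xi N) (s : Set ℕ) :=
  linearIndepOn_of_dotProduct_eq_zero
    (fun a ha b hb hab => xi_dotProduct_xi hN hab (hs a ha) (hs b hb))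
    (fun m _ => (xi_dotProduct_self_pos hN m).ne')

lemma finrank_span_xi (hN : 0 < N) {s : Finset ℕ} (hs : ∀ m ∈ s, 2 * m ≤ N) :
    Module.finrank ℝ (Submodule.span ℝ (xi N '' s)) = s.card := by
  rw [Set.image_eq_range, finrank_span_eq_card (linearIndepOn_xi hN hs)]
  exact Fintype.card_coe s

end Xi

section EvenSignals

variable {N : ℕ}

lemma two_mul_le_of_mem_Icc_div_two {a m : ℕ} (hm : m ∈ Finset.Icc a (N / 2)) : 2 * m ≤ N := by
  rw [Finset.mem_Icc] at hm
  omega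

lemma finrank_evenSignals_le (hN : 0 < N) : Module.finrank ℝ (evenSignals N) ≤ N / 2 + 1 := by
  let restrict : evenSignals N →ₗ[ℝ] Fin (N / 2 + 1) → ℝ :=
    { toFun x j := x.1 ⟨j, by omega⟩
      map_add' _ _ := rfl
      map_smul' _ _ := rfl }
  have hinj : Function.Injective restrict := by
    rw [← LinearMap.ker_eq_bot, LinearMap.ker_eq_bot']
    rintro ⟨x, hx⟩ h0
    have hhalf : ∀ k : Fin N, 2 * k.val ≤ N → x k = 0 := fun k hk =>
      congrFun h0 ⟨k.val, by omega⟩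
    ext k
    show x k = 0
    by_cases hk : 2 * k.val ≤ N
    · exact hhalf k hk
    · rw [hx k (by omega)]
      exact hhalf _ (by simp only; omega)
  simpa using LinearMap.finrank_le_finrank_of_injective hinj

lemma span_xi_eq_evenSignals (hN : 0 < N) :
    Submodule.span ℝ (xi N '' ↑(Finset.Icc 0 (N / 2))) = evenSignals N := by
  refine Submodule.eq_of_le_of_finrank_le ?_ ?_
  · rw [Submodule.span_le]
    rintro _ ⟨m, -, rfl⟩
    exact xi_mem_evenSignals m
  · rw [finrank_span_xi hN fun _ => two_mul_le_of_mem_Icc_div_two, Nat.card_Icc, Nat.sub_zero]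
    exact finrank_evenSignals_le hN

lemma evenSignals_inf_ker_realStilde {n : ℕ} (hN : 0 < N) (h2n : 2 * n ≤ N) :
    evenSignals N ⊓ LinearMap.ker (realStilde N n) =
      Submodule.span ℝ (xi N '' ↑(Finset.Icc n (N / 2))) := by
  apply le_antisymm
  · intro y hy
    obtain ⟨hy, hker⟩ := Submodule.mem_inf.1 hy
    rw [← span_xi_eq_evenSignals hN, Submodule.mem_span_image_finset_iff_exists_fun'] at hy
    obtain ⟨c, rfl⟩ := hy
    -- pairing with `ξ_i` reads off the coefficient `c i`, which vanishes for `i < n`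
    have hc : ∀ i < n, c i = 0 := by
      intro i hi
      have hi' : i ∈ Finset.Icc 0 (N / 2) := Finset.mem_Icc.2 ⟨i.zero_le, by omega⟩
      have hpair := re_realStilde_apply (∑ m ∈ Finset.Icc 0 (N / 2), c m • xi N m) ⟨i, hi⟩
      rw [LinearMap.mem_ker.1 hker, sum_smul_dotProduct_of_orthogonal c hi' fun m hm hmi =>
        xi_dotProduct_xi hN hmi (two_mul_le_of_mem_Icc_div_two hm) (by omega)] at hpair
      exact (mul_eq_zero.1 hpair.symm).resolve_right (xi_dotProduct_self_pos hN i).ne'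
    rw [Submodule.mem_span_image_finset_iff_exists_fun']
    refine ⟨c, Finset.sum_subset (Finset.Icc_subset_Icc_left n.zero_le) fun m hm hmn => ?_⟩
    rw [hc m (by rw [Finset.mem_Icc] at hm hmn; omega), zero_smul]
  · rw [Submodule.span_le]
    rintro _ ⟨m, hm, rfl⟩
    rw [Finset.coe_Icc, Set.mem_Icc] at hm
    exact ⟨xi_mem_evenSignals m, realStilde_xi hN hm.1 (by omega)⟩

lemma setOf_Stilde_mulVec_eq_eq_mk' {n : ℕ} (hN : 0 < N) (h2n : 2 * n ≤ N) {r : Fin n → ℂ}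
    {xstar : Fin N → ℝ} (hxr : Stilde N n *ᵥ (fun k => (xstar k : ℂ)) = r)
    (hxeven : xstar ∈ evenSignals N) :
    {x : Fin N → ℝ | Stilde N n *ᵥ (fun k => (x k : ℂ)) = r ∧
        ∀ k : Fin N, ∀ hk : 1 ≤ k.val, x k = x ⟨N - k.val, Nat.sub_lt k.pos hk⟩} =
      AffineSubspace.mk' xstar (Submodule.span ℝ (xi N '' ↑(Finset.Icc n (N / 2)))) := by
  ext x
  rw [SetLike.mem_coe, AffineSubspace.mem_mk', vsub_eq_sub,
    ← evenSignals_inf_ker_realStilde hN h2n, Submodule.mem_inf, LinearMap.mem_ker, map_sub,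
    sub_eq_zero, realStilde_apply, realStilde_apply, hxr, Submodule.sub_mem_iff_left _ hxeven]
  exact and_comm

end EvenSignals

theorem stmt7_general (N n : ℕ) (hn : 1 ≤ n) (h2n : 2 * n ≤ N) (r : Fin n → ℝ)
    (xstar : Fin N → ℝ) (hx : xstar ∈ Xset N n r) :
    ({x : Fin N → ℝ |
        (Stilde N n).mulVec (fun k => (x k : ℂ)) = (fun i => (r i : ℂ)) ∧
        ∀ k : Fin N, ∀ hk : 1 ≤ k.val, x k = x ⟨N - k.val, Nat.sub_lt k.pos hk⟩} =
      {x : Fin N → ℝ | ∃ c : ℕ → ℝ,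
        x = xstar + fun t => ∑ m ∈ Finset.Icc n (N / 2), c m * xi N m t}) ∧
    LinearIndependent ℝ (fun m : {m : ℕ // m ∈ Finset.Icc n (N / 2)} => xi N m.val) ∧
    Module.finrank ℝ (vectorSpan ℝ
      {x : Fin N → ℝ |
        (Stilde N n).mulVec (fun k => (x k : ℂ)) = (fun i => (r i : ℂ)) ∧
        ∀ k : Fin N, ∀ hk : 1 ≤ k.val, x k = x ⟨N - k.val, Nat.sub_lt k.pos hk⟩})
      = N / 2 - n + 1 := by
  have hN : 0 < N := by omega
  have hhalf : ∀ m ∈ Finset.Icc n (N / 2), 2 * m ≤ N := fun _ => two_mul_le_of_mem_Icc_div_two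
  obtain ⟨hxr, -, hxeven⟩ := hx
  rw [setOf_Stilde_mulVec_eq_eq_mk' hN h2n hxr hxeven]
  refine ⟨?_, linearIndepOn_xi hN hhalf, ?_⟩
  · ext x
    rw [SetLike.mem_coe, AffineSubspace.mem_mk', vsub_eq_sub,
      Submodule.mem_span_image_finset_iff_exists_fun', Set.mem_ofPred_eq]
    refine exists_congr fun c => ?_
    rw [eq_sub_iff_add_eq', eq_comm]
    constructor <;> rintro rfl <;> ext t <;> simp
  · rw [← AffineSubspace.direction_eq_vectorSpan, AffineSubspace.direction_mk',
      finrank_span_xi hN hhalf, Nat.card_Icc]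
    omega

/-- for even `N ≥ 2n`, `r ∈ ℱ` and `x* ∈ X̃(r)`, the solution set of
`S̃x = r` with the symmetry constraint is `x* ⊕ span{ξ_n,…,ξ_{N/2}}`; the `ξ_m`
(for `n ≤ m ≤ N/2`) are linearly independent, so this set is an affine subspace of
dimension `N/2 - n + 1`. -/
theorem stmt7 (N n : ℕ) (hn : 1 ≤ n) (h2n : 2 * n ≤ N) (hN : Even N)
    (C : ℝ) (hC : 0 < C) (r : Fin n → ℝ) (hr : r ∈ Fset N n C)
    (xstar : Fin N → ℝ) (hx : xstar ∈ Xset N n r) :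
    ({x : Fin N → ℝ |
        (Stilde N n).mulVec (fun k => (x k : ℂ)) = (fun i => (r i : ℂ)) ∧
        ∀ k : Fin N, ∀ hk : 1 ≤ k.val, x k = x ⟨N - k.val, Nat.sub_lt k.pos hk⟩} =
      {x : Fin N → ℝ | ∃ c : ℕ → ℝ,
        x = xstar + fun t => ∑ m ∈ Finset.Icc n (N / 2), c m * xi N m t}) ∧
    LinearIndependent ℝ (fun m : {m : ℕ // m ∈ Finset.Icc n (N / 2)} => xi N m.val) ∧
    Module.finrank ℝ (vectorSpan ℝ
      {x : Fin N → ℝ |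
        (Stilde N n).mulVec (fun k => (x k : ℂ)) = (fun i => (r i : ℂ)) ∧
        ∀ k : Fin N, ∀ hk : 1 ≤ k.val, x k = x ⟨N - k.val, Nat.sub_lt k.pos hk⟩})
      = N / 2 - n + 1 :=
  stmt7_general N n hn h2n r xstar hx
end
end

section
/- Suppose n ≤ N ≤ 2n−1 and r ∈ ℱ. Then X̃(r) contains exactly one element (it is a singleton). -/
open scoped BigOperators
open Complex Matrix

noncomputable section

namespace Stmt8Aux

noncomputable def w (N : ℕ) : ℂ := Complex.exp (2 * Real.pi * Complex.I / N)

lemma w_pow_N (N : ℕ) (hN : 0 < N) : w N ^ N = 1 :=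
  (Complex.isPrimitiveRoot_exp N hN.ne').pow_eq_one

lemma w_orth (N : ℕ) (hN : 0 < N) (a : ℕ) :
    ∑ k : Fin N, w N ^ (a * k.val) = if N ∣ a then (N : ℂ) else 0 := by
  have hprim := Complex.isPrimitiveRoot_exp N hN.ne'
  by_cases h : N ∣ a
  · have h1 : w N ^ a = 1 := (hprim.pow_eq_one_iff_dvd a).mpr h
    simp only [if_pos h, pow_mul, h1, one_pow]
    simp
  · have h1 : w N ^ a ≠ 1 := fun hh => h ((hprim.pow_eq_one_iff_dvd a).mp hh)
    simp only [if_neg h, pow_mul]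
    rw [Fin.sum_univ_eq_sum_range (fun k => (w N ^ a) ^ k), geom_sum_eq h1 N]
    rw [← pow_mul, mul_comm a N, pow_mul, w_pow_N N hN, one_pow, sub_self, zero_div]

lemma conj_w (N : ℕ) : (starRingEnd ℂ) (w N) = (w N)⁻¹ := by
  rw [w, ← Complex.exp_conj, ← Complex.exp_neg]
  congr 1
  simp [map_div₀, Complex.conj_I, map_ofNat]
  ring

lemma conj_w_pow (N e : ℕ) : (starRingEnd ℂ) (w N ^ e) = (w N ^ e)⁻¹ := by
  rw [map_pow, conj_w, inv_pow]

lemma w_pow_inv (N : ℕ) (hN : 0 < N) {a b : ℕ} (h : a + b = N) (k : ℕ) :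
    w N ^ (a * k) = (w N ^ (b * k))⁻¹ := by
  refine eq_inv_of_mul_eq_one_left ?_
  rw [← pow_add]
  have h2 : a * k + b * k = N * k := by rw [← add_mul, h]
  rw [h2, pow_mul, w_pow_N N hN, one_pow]

lemma dvd_window {N x : ℕ} (h1 : 0 < x) (h2 : x < 2 * N) (hd : N ∣ x) : x = N := by
  have hN : 0 < N := by omega
  have hle := Nat.le_of_dvd h1 hd
  have hd2 : N ∣ (x - N) := Nat.dvd_sub hd dvd_rfl
  have := Nat.eq_zero_of_dvd_of_lt hd2
  omega

lemma w_inv_pow (N : ℕ) (hN : 0 < N) (e : ℕ) : (w N ^ e)⁻¹ = w N ^ ((N - 1) * e) := by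
  refine (eq_inv_of_mul_eq_one_left ?_).symm
  rw [← pow_add]
  have h2 : (N - 1) * e + e = N * e := by
    have h1 : N - 1 + 1 = N := by omega
    calc (N - 1) * e + e = ((N - 1) + 1) * e := by ring
      _ = N * e := by rw [h1]
  rw [h2, pow_mul, w_pow_N N hN, one_pow]

lemma dvd_iff_mod (N s t i : ℕ) (hN : 0 < N) (hs : s < N) :
    N ∣ ((N - 1) * s + t + i) ↔ s = (t + i) % N := by
  have h1 : N - 1 + 1 = N := by omega
  have hX : (N - 1) * s + t + i + s = N * s + (t + i) := by
    calc (N - 1) * s + t + i + s = ((N - 1) + 1) * s + (t + i) := by ring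
      _ = N * s + (t + i) := by rw [h1]
  constructor
  · rintro ⟨q, hq⟩
    have h2 : N * q + s = N * s + (t + i) := by rw [← hq]; exact hX
    have h3 := congrArg (· % N) h2
    simpa [Nat.mul_add_mod, Nat.mod_eq_of_lt hs] using h3
  · intro hsm
    have hq : t + i = N * ((t + i) / N) + s := by
      conv_lhs => rw [← Nat.div_add_mod (t + i) N]
      rw [hsm]
    refine ⟨s + (t + i) / N, ?_⟩
    have h3 : N * (s + (t + i) / N) + s = N * s + (t + i) := by
      conv_rhs => rw [hq]
      ring
    exact Nat.add_right_cancel (hX.trans h3.symm)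

lemma shift_bij (N c : ℕ) (hN : 0 < N) :
    Function.Bijective (fun t : Fin N => (⟨(t.val + c) % N, Nat.mod_lt _ hN⟩ : Fin N)) := by
  rw [Fintype.bijective_iff_injective_and_card]
  refine ⟨fun a b hab => ?_, rfl⟩
  have h : (a.val + c) % N = (b.val + c) % N := congrArg Fin.val hab
  have h2 : a.val % N = b.val % N := Nat.ModEq.add_right_cancel' c h
  exact Fin.ext (by rwa [Nat.mod_eq_of_lt a.isLt, Nat.mod_eq_of_lt b.isLt] at h2)

lemma uniq (N n : ℕ) (hn : 1 ≤ n) (hNn : n ≤ N) (hNb : N ≤ 2 * n - 1)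
    (c : Fin N → ℝ)
    (hc : ∀ i : Fin n, ∑ k : Fin N, (c k : ℂ) * w N ^ (i.val * k.val) = 0) :
    ∀ t, c t = 0 := by
  have hN : 0 < N := lt_of_lt_of_le hn hNn
  have hall : ∀ m : Fin N, ∑ k : Fin N, (c k : ℂ) * w N ^ (m.val * k.val) = 0 := by
    intro m
    by_cases hm : m.val < n
    · exact hc ⟨m.val, hm⟩
    · push_neg at hm
      have hiN : N - m.val < n := by omega
      have h0 := hc ⟨N - m.val, hiN⟩
      have h1 := congrArg (starRingEnd ℂ) h0
      rw [map_sum, map_zero] at h1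
      simp only [_root_.map_mul, Complex.conj_ofReal, conj_w_pow] at h1
      rw [← h1]
      refine Finset.sum_congr rfl fun k _ => ?_
      rw [w_pow_inv N hN (show m.val + (N - m.val) = N by omega) k.val]
  intro t
  have key : ∑ m : Fin N, w N ^ ((N - t.val) * m.val) *
      ∑ k : Fin N, (c k : ℂ) * w N ^ (m.val * k.val) = 0 := by
    simp [hall]
  have key2 : ∑ k : Fin N, (c k : ℂ) *
      ∑ m : Fin N, w N ^ ((N - t.val + k.val) * m.val) = 0 := by
    calc ∑ k : Fin N, (c k : ℂ) * ∑ m : Fin N, w N ^ ((N - t.val + k.val) * m.val)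
        = ∑ k : Fin N, ∑ m : Fin N, (c k : ℂ) * w N ^ ((N - t.val + k.val) * m.val) := by
          simp [Finset.mul_sum]
      _ = ∑ m : Fin N, ∑ k : Fin N, (c k : ℂ) * w N ^ ((N - t.val + k.val) * m.val) :=
          Finset.sum_comm
      _ = ∑ m : Fin N, w N ^ ((N - t.val) * m.val) *
            ∑ k : Fin N, (c k : ℂ) * w N ^ (m.val * k.val) := by
          refine Finset.sum_congr rfl fun m _ => ?_
          rw [Finset.mul_sum]
          refine Finset.sum_congr rfl fun k _ => ?_
          rw [← mul_assoc, mul_comm (w N ^ ((N - t.val) * m.val)) ((c k : ℂ)), mul_assoc,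
            ← pow_add]
          congr 2
          ring
      _ = 0 := key
  have key3 : ∑ k : Fin N, (c k : ℂ) * (if k = t then (N : ℂ) else 0) = 0 := by
    refine Eq.trans (Finset.sum_congr rfl fun k _ => ?_) key2
    rw [w_orth N hN]
    congr 1
    by_cases hkt : k = t
    · subst hkt
      have hdvd : N ∣ N - k.val + k.val := by
        have hx : N - k.val + k.val = N := by omega
        rw [hx]
      rw [if_pos rfl, if_pos hdvd]
    · have hnd : ¬ N ∣ (N - t.val + k.val) := by
        intro hd
        have hx1 : 0 < N - t.val + k.val := by omega
        have hx2 : N - t.val + k.val < 2 * N := by omega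
        have := dvd_window hx1 hx2 hd
        exact hkt (Fin.ext (by omega))
      rw [if_neg hkt, if_neg hnd]
  simp only [mul_ite, mul_zero, Finset.sum_ite_eq', Finset.mem_univ, if_true] at key3
  rcases mul_eq_zero.mp key3 with h | h
  · exact_mod_cast h
  · exact absurd h (by exact_mod_cast hN.ne')

lemma Stilde_eq (N n : ℕ) (i : Fin n) (k : Fin N) :
    Stilde N n i k = w N ^ (i.val * k.val) := by
  rw [Stilde, w, ← Complex.exp_nat_mul]
  congr 1
  push_cast
  ring

lemma exist_mem (N n : ℕ) (hn : 1 ≤ n) (hNn : n ≤ N) (u : Fin N → ℝ) :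
    ∃ x : Fin N → ℝ,
      (∀ i : Fin n, ∑ k : Fin N, (x k : ℂ) * w N ^ (i.val * k.val) = (autocov N n u i : ℂ)) ∧
      (∀ k, 0 ≤ x k) ∧
      (∀ k : Fin N, ∀ hk : 1 ≤ k.val, x k = x ⟨N - k.val, Nat.sub_lt k.pos hk⟩) := by
  have hN : 0 < N := lt_of_lt_of_le hn hNn
  have hNne : (N : ℂ) ≠ 0 := Nat.cast_ne_zero.mpr hN.ne'
  set v : Fin N → ℂ := fun k => ∑ t : Fin N, (u t : ℂ) * w N ^ (k.val * t.val) with hv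
  refine ⟨fun k => Complex.normSq (v k) / N, ?_, ?_, ?_⟩
  · intro i
    have hiN : i.val ≤ N := le_of_lt (lt_of_lt_of_le i.isLt hNn)
    have hconjv : ∀ k : Fin N,
        (starRingEnd ℂ) (v k) = ∑ s : Fin N, (u s : ℂ) * w N ^ ((N - 1) * (k.val * s.val)) := by
      intro k
      simp only [hv, map_sum]
      refine Finset.sum_congr rfl fun s _ => ?_
      rw [_root_.map_mul, Complex.conj_ofReal, conj_w_pow, w_inv_pow N hN]
    have hkey : ∑ k : Fin N, (starRingEnd ℂ) (v k) * v k * w N ^ (i.val * k.val)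
        = N * (autocov N n u i : ℂ) := by
      have step1 : ∀ k : Fin N, (starRingEnd ℂ) (v k) * v k * w N ^ (i.val * k.val)
          = ∑ s : Fin N, ∑ t : Fin N,
              (u s : ℂ) * u t * w N ^ (((N - 1) * s.val + t.val + i.val) * k.val) := by
        intro k
        rw [hconjv k]
        simp only [hv]
        rw [Finset.sum_mul_sum, Finset.sum_mul]
        refine Finset.sum_congr rfl fun s _ => ?_
        rw [Finset.sum_mul]
        refine Finset.sum_congr rfl fun t _ => ?_
        rw [show ((N - 1) * s.val + t.val + i.val) * k.val
            = (N - 1) * (k.val * s.val) + k.val * t.val + i.val * k.val by ring,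
          pow_add, pow_add]
        ring
      calc ∑ k : Fin N, (starRingEnd ℂ) (v k) * v k * w N ^ (i.val * k.val)
          = ∑ k : Fin N, ∑ s : Fin N, ∑ t : Fin N,
              (u s : ℂ) * u t * w N ^ (((N - 1) * s.val + t.val + i.val) * k.val) :=
            Finset.sum_congr rfl fun k _ => step1 k
        _ = ∑ s : Fin N, ∑ t : Fin N, (u s : ℂ) * u t *
              ∑ k : Fin N, w N ^ (((N - 1) * s.val + t.val + i.val) * k.val) := by
            rw [Finset.sum_comm]
            refine Finset.sum_congr rfl fun s _ => ?_
            rw [Finset.sum_comm]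
            refine Finset.sum_congr rfl fun t _ => ?_
            rw [Finset.mul_sum]
        _ = ∑ t : Fin N, ∑ s : Fin N, (u s : ℂ) * u t *
              (if s = (⟨(t.val + i.val) % N, Nat.mod_lt _ hN⟩ : Fin N) then (N : ℂ) else 0) := by
            rw [Finset.sum_comm]
            refine Finset.sum_congr rfl fun t _ => Finset.sum_congr rfl fun s _ => ?_
            rw [w_orth N hN]
            congr 1
            have hcond : (N ∣ (N - 1) * s.val + t.val + i.val) ↔
                (s = (⟨(t.val + i.val) % N, Nat.mod_lt _ hN⟩ : Fin N)) := by
              rw [dvd_iff_mod N s.val t.val i.val hN s.isLt, Fin.ext_iff]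
            exact if_congr hcond rfl rfl
        _ = ∑ t : Fin N, (u (⟨(t.val + i.val) % N, Nat.mod_lt _ hN⟩ : Fin N) : ℂ) * u t * (N : ℂ) := by
            refine Finset.sum_congr rfl fun t _ => ?_
            simp only [mul_ite, mul_zero]
            rw [Finset.sum_ite_eq' Finset.univ (⟨(t.val + i.val) % N, Nat.mod_lt _ hN⟩ : Fin N)
              (fun s => (u s : ℂ) * u t * N)]
            simp
        _ = N * (autocov N n u i : ℂ) := by
            have hre : ∑ t : Fin N, u (⟨(t.val + i.val) % N, Nat.mod_lt _ hN⟩ : Fin N) * u t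
                = autocov N n u i := by
              have hσ := shift_bij N (N - i.val) hN
              have hsum := Fintype.sum_bijective _ hσ
                (fun t : Fin N => u t * u (⟨(t.val + (N - i.val)) % N, Nat.mod_lt _ hN⟩ : Fin N))
                (fun t : Fin N => u (⟨(t.val + i.val) % N, Nat.mod_lt _ hN⟩ : Fin N) * u t)
                (fun t => by
                  have hidx : (((t.val + (N - i.val)) % N) + i.val) % N = t.val := by
                    rw [Nat.mod_add_mod]
                    have h5 : t.val + (N - i.val) + i.val = t.val + N := by omega
                    rw [h5, Nat.add_mod_right, Nat.mod_eq_of_lt t.isLt]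
                  simp only []
                  congr 1
                  exact congrArg u (Fin.ext hidx.symm))
              rw [autocov, ← hsum]
            rw [← hre]
            push_cast
            rw [Finset.mul_sum]
            exact Finset.sum_congr rfl fun t _ => by ring
    calc ∑ k : Fin N, ((Complex.normSq (v k) / N : ℝ) : ℂ) * w N ^ (i.val * k.val)
        = ∑ k : Fin N, (starRingEnd ℂ) (v k) * v k * w N ^ (i.val * k.val) * (N : ℂ)⁻¹ := by
          refine Finset.sum_congr rfl fun k _ => ?_
          rw [Complex.ofReal_div, Complex.normSq_eq_conj_mul_self]
          push_cast
          ring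
      _ = (∑ k : Fin N, (starRingEnd ℂ) (v k) * v k * w N ^ (i.val * k.val)) * (N : ℂ)⁻¹ :=
          (Finset.sum_mul _ _ _).symm
      _ = (autocov N n u i : ℂ) := by
          rw [hkey]
          field_simp
  · intro k
    exact div_nonneg (Complex.normSq_nonneg _) (Nat.cast_nonneg N)
  · intro k hk
    have hvc : v ⟨N - k.val, Nat.sub_lt k.pos hk⟩ = (starRingEnd ℂ) (v k) := by
      simp only [hv, map_sum]
      refine Finset.sum_congr rfl fun t _ => ?_
      rw [_root_.map_mul, Complex.conj_ofReal, conj_w_pow,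
        ← w_pow_inv N hN (show (N - k.val) + k.val = N by omega) t.val]
    show Complex.normSq (v k) / N = Complex.normSq (v _) / N
    rw [hvc, Complex.normSq_conj]

end Stmt8Aux

open Stmt8Aux in

/-- for `n ≤ N ≤ 2n - 1` and `r ∈ ℱ`, the set `X̃(r)` is a singleton. -/
theorem stmt8 (N n : ℕ) (hn : 1 ≤ n) (hNn : n ≤ N) (hN : N ≤ 2 * n - 1)
    (C : ℝ) (hC : 0 < C) (r : Fin n → ℝ) (hr : r ∈ Fset N n C) :
    ∃ x : Fin N → ℝ, Xset N n r = {x} := by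
  obtain ⟨u, -, hu⟩ := hr
  have hN0 : 0 < N := lt_of_lt_of_le hn hNn
  obtain ⟨x, hx1, hx2, hx3⟩ := exist_mem N n hn hNn u
  have hmulVec : ∀ (z : Fin N → ℝ) (i : Fin n),
      (Stilde N n).mulVec (fun k => (z k : ℂ)) i = ∑ k : Fin N, (z k : ℂ) * w N ^ (i.val * k.val) := by
    intro z i
    simp only [Matrix.mulVec, dotProduct, Stilde_eq]
    exact Finset.sum_congr rfl fun k _ => mul_comm _ _
  have hmem : x ∈ Xset N n r := by
    refine ⟨funext fun i => ?_, hx2, hx3⟩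
    rw [hmulVec x i, hx1 i, hu]
  refine ⟨x, ?_⟩
  rw [Set.eq_singleton_iff_unique_mem]
  refine ⟨hmem, fun y hy => ?_⟩
  obtain ⟨hy1, -, -⟩ := hy
  obtain ⟨hm1, -, -⟩ := hmem
  funext t
  have hdiff : ∀ i : Fin n,
      ∑ k : Fin N, ((y k - x k : ℝ) : ℂ) * w N ^ (i.val * k.val) = 0 := by
    intro i
    have e1 := congrFun hy1 i
    have e2 := congrFun hm1 i
    rw [hmulVec y i] at e1
    rw [hmulVec x i] at e2
    push_cast
    simp only [sub_mul]
    rw [Finset.sum_sub_distrib, e1, e2, sub_self]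
  have := uniq N n hn hNn hN (fun k => y k - x k) hdiff t
  have : y t - x t = 0 := this
  linarith
end
end

section
/- Suppose N = n and r = f(u) for some u ∈ ℝ^n with uᵀu = C. Then the vector x ∈ ℂ^n defined by x_k = (1/n) Σ_{i=0}^{n−1} r_i e^{−jϖki} (0 ≤ k ≤ n−1) has real nonnegative entries, and X̃(r) = {x}; that is, the unique element of X̃(r) is R/√n, where R is the discrete Fourier transform of r with R_k = n^{−1/2} Σ_{i=0}^{n−1} r_i e^{−jϖki}. -/
open scoped BigOperators
open Complex Matrix

noncomputable section

namespace Stmt9Aux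

noncomputable def E (n : ℕ) (m : ℤ) : ℂ := Complex.exp (Complex.I * (2 * Real.pi / n) * m)

lemma E_add (n : ℕ) (a b : ℤ) : E n (a + b) = E n a * E n b := by
  rw [E, E, E, ← Complex.exp_add]; congr 1; push_cast; ring

lemma E_zero (n : ℕ) : E n 0 = 1 := by simp [E]

lemma E_nmul (n : ℕ) (hn : n ≠ 0) (q : ℤ) : E n ((n : ℤ) * q) = 1 := by
  have hn' : (n : ℂ) ≠ 0 := Nat.cast_ne_zero.mpr hn
  have h : Complex.I * (2 * Real.pi / n) * (((n : ℤ) * q : ℤ) : ℂ)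
      = (q : ℂ) * (2 * (Real.pi : ℂ) * Complex.I) := by
    push_cast; field_simp
  rw [E, h, Complex.exp_int_mul_two_pi_mul_I]

lemma E_pow (n : ℕ) (k : ℕ) (m : ℤ) : E n ((k : ℤ) * m) = (E n m) ^ k := by
  rw [E, E, ← Complex.exp_nat_mul]; congr 1; push_cast; ring

lemma E_conj (n : ℕ) (m : ℤ) : (starRingEnd ℂ) (E n m) = E n (-m) := by
  rw [E, E, ← Complex.exp_conj]; congr 1
  simp only [_root_.map_mul, map_div₀, Complex.conj_I, Complex.conj_ofReal, map_natCast,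
    map_intCast, map_ofNat]
  push_cast
  ring

lemma E_ne_one (n : ℕ) (hn : 0 < n) (d : ℤ) (hd0 : d ≠ 0) (hd : d.natAbs < n) :
    E n d ≠ 1 := by
  intro h
  rw [E, Complex.exp_eq_one_iff] at h
  obtain ⟨m, hm⟩ := h
  have hπ : (Real.pi : ℂ) ≠ 0 := by exact_mod_cast Real.pi_ne_zero
  have hn' : (n : ℂ) ≠ 0 := Nat.cast_ne_zero.mpr hn.ne'
  have hdm : (d : ℂ) = (n : ℂ) * m := by
    field_simp at hm
    have h2 : ((2 : ℂ) * Real.pi * Complex.I) * (d : ℂ)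
        = ((2 : ℂ) * Real.pi * Complex.I) * ((n : ℂ) * m) := by
      linear_combination ((2 : ℂ) * Real.pi * Complex.I) * hm
    exact mul_left_cancel₀ (by simp [Real.pi_ne_zero, Complex.I_ne_zero,
      Complex.ofReal_ne_zero]) h2
  have hdm' : d = (n : ℤ) * m := by exact_mod_cast hdm
  have hm0 : m ≠ 0 := by rintro rfl; simp at hdm'; exact hd0 hdm'
  have : n ≤ d.natAbs := by
    rw [hdm', Int.natAbs_mul]
    simpa using Nat.le_mul_of_pos_right n (Int.natAbs_pos.mpr hm0)
  omega

lemma E_sum (n : ℕ) (hn : 0 < n) (a b : Fin n) :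
    ∑ k : Fin n, E n ((k.val : ℤ) * ((a.val : ℤ) - (b.val : ℤ)))
      = if a = b then (n : ℂ) else 0 := by
  by_cases hab : a = b
  · subst hab
    simp [E_zero]
  · rw [if_neg hab]
    set d : ℤ := (a.val : ℤ) - (b.val : ℤ) with hd
    have hd0 : d ≠ 0 := by
      have : a.val ≠ b.val := fun h => hab (Fin.ext h)
      omega
    have hdlt : d.natAbs < n := by
      have := a.isLt; have := b.isLt; omega
    have hz1 : E n d ≠ 1 := E_ne_one n hn d hd0 hdlt
    have hzn : (E n d) ^ n = 1 := by
      rw [← E_pow, E_nmul n hn.ne']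
    calc ∑ k : Fin n, E n ((k.val : ℤ) * d)
        = ∑ k : Fin n, (E n d) ^ (k.val) := by
          refine Finset.sum_congr rfl fun k _ => E_pow n k.val d
      _ = ∑ k ∈ Finset.range n, (E n d) ^ k := by
          rw [Fin.sum_univ_eq_sum_range]
      _ = ((E n d) ^ n - 1) / (E n d - 1) := geom_sum_eq hz1 n
      _ = 0 := by rw [hzn]; simp

lemma mod_inv (n t i : ℕ) (ht : t < n) (hi : i < n) :
    (t + (n - (t + (n - i)) % n)) % n = i := by
  rcases lt_or_ge t i with h | h
  · have h1 : t + (n - i) < n := by omega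
    rw [Nat.mod_eq_of_lt h1]
    have h2 : t + (n - (t + (n - i))) = i := by omega
    rw [h2, Nat.mod_eq_of_lt hi]
  · have h1 : t + (n - i) = (t - i) + n := by omega
    rw [h1, Nat.add_mod_right, Nat.mod_eq_of_lt (by omega : t - i < n)]
    have h2 : t + (n - (t - i)) = i + n := by omega
    rw [h2, Nat.add_mod_right, Nat.mod_eq_of_lt hi]

lemma mod_congr (n t i : ℕ) (hi : i ≤ n) :
    ∃ q : ℤ, (((t + (n - i)) % n : ℕ) : ℤ) = (t : ℤ) - i + n * q := by
  set D := (t + (n - i)) / n with hD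
  set M := (t + (n - i)) % n with hM
  refine ⟨1 - (D : ℤ), ?_⟩
  have h0 : n * D + M = t + (n - i) := Nat.div_add_mod _ _
  zify [hi] at h0
  linear_combination h0

lemma Stilde_eq (n : ℕ) (a b : Fin n) :
    Stilde n n a b = E n ((a.val : ℤ) * b.val) := by
  rw [Stilde, E]; congr 1; push_cast; ring

lemma recover (n : ℕ) (hn : 0 < n) (w : Fin n → ℂ) (k : Fin n) :
    ∑ i : Fin n, E n (-((i.val : ℤ) * k.val)) * (Stilde n n).mulVec w i
      = (n : ℂ) * w k := by
  simp only [Matrix.mulVec, dotProduct, Stilde_eq, Finset.mul_sum]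
  rw [Finset.sum_comm]
  have hin : ∀ l : Fin n,
      ∑ i : Fin n, E n (-((i.val : ℤ) * k.val)) * (E n ((i.val : ℤ) * l.val) * w l)
        = (if l = k then (n : ℂ) else 0) * w l := by
    intro l
    have hterm : ∀ i : Fin n,
        E n (-((i.val : ℤ) * k.val)) * (E n ((i.val : ℤ) * l.val) * w l)
          = E n ((i.val : ℤ) * ((l.val : ℤ) - k.val)) * w l := by
      intro i
      rw [show E n (-((i.val : ℤ) * k.val)) * (E n ((i.val : ℤ) * l.val) * w l)
          = (E n (-((i.val : ℤ) * k.val)) * E n ((i.val : ℤ) * l.val)) * w l from by ring,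
        ← E_add]
      congr 2
      ring
    rw [Finset.sum_congr rfl fun i _ => hterm i, ← Finset.sum_mul, E_sum n hn l k]
  rw [Finset.sum_congr rfl fun l _ => hin l]
  simp [ite_mul, Finset.sum_ite_eq]

lemma E_shift (n : ℕ) (hn : 0 < n) (k t i : Fin n) :
    E n ((k.val : ℤ) * (((((t.val + (n - i.val)) % n : ℕ)) : ℤ) - (t.val : ℤ)))
      = E n (-((k.val : ℤ) * i.val)) := by
  obtain ⟨q, hq⟩ := mod_congr n t.val i.val i.isLt.le
  rw [hq]
  have h2 : (k.val : ℤ) * (((t.val : ℤ) - i.val + n * q) - t.val)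
      = -((k.val : ℤ) * i.val) + (n : ℤ) * ((k.val : ℤ) * q) := by ring
  rw [h2, E_add, E_nmul n hn.ne', mul_one]

lemma autocov_dft (n : ℕ) (hn : 0 < n) (u : Fin n → ℝ) (k : Fin n) :
    ∑ i : Fin n, ((autocov n n u i : ℝ) : ℂ) * E n (-((k.val : ℤ) * i.val)) =
    (∑ t : Fin n, (u t : ℂ) * E n (-((k.val : ℤ) * t.val))) *
      (starRingEnd ℂ) (∑ t : Fin n, (u t : ℂ) * E n (-((k.val : ℤ) * t.val))) := by
  have hconj : (starRingEnd ℂ) (∑ t : Fin n, (u t : ℂ) * E n (-((k.val : ℤ) * t.val)))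
      = ∑ s : Fin n, (u s : ℂ) * E n ((k.val : ℤ) * s.val) := by
    rw [map_sum]
    refine Finset.sum_congr rfl fun s _ => ?_
    rw [_root_.map_mul, Complex.conj_ofReal, E_conj, neg_neg]
  rw [hconj, Finset.sum_mul_sum]
  have hL : ∀ i : Fin n, ((autocov n n u i : ℝ) : ℂ)
      = ∑ t : Fin n, (u t : ℂ) *
          (u ⟨(t.val + (n - i.val)) % n, Nat.mod_lt _ t.pos⟩ : ℂ) := by
    intro i; rw [autocov]; push_cast; rfl
  simp only [hL, Finset.sum_mul]
  have hbij : Function.Bijective (fun p : Fin n × Fin n =>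
      ((p.2, (⟨(p.2.val + (n - p.1.val)) % n, Nat.mod_lt _ p.2.pos⟩ : Fin n))
        : Fin n × Fin n)) := by
    rw [Function.bijective_iff_has_inverse]
    refine ⟨fun p => ((⟨(p.1.val + (n - p.2.val)) % n, Nat.mod_lt _ p.1.pos⟩ : Fin n),
      p.1), ?_, ?_⟩
    · rintro ⟨i, t⟩
      refine Prod.ext ?_ rfl
      exact Fin.ext (mod_inv n t.val i.val t.isLt i.isLt)
    · rintro ⟨t, s⟩
      refine Prod.ext rfl ?_
      exact Fin.ext (mod_inv n t.val s.val t.isLt s.isLt)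
  have key := Fintype.sum_bijective _ hbij
    (fun p : Fin n × Fin n =>
      ((u p.2 : ℂ) * (u ⟨(p.2.val + (n - p.1.val)) % n, Nat.mod_lt _ p.2.pos⟩ : ℂ)) *
        E n (-((k.val : ℤ) * p.1.val)))
    (fun p : Fin n × Fin n =>
      ((u p.1 : ℂ) * E n (-((k.val : ℤ) * p.1.val))) *
        ((u p.2 : ℂ) * E n ((k.val : ℤ) * p.2.val)))
    ?_
  · rw [Fintype.sum_prod_type, Fintype.sum_prod_type] at key
    exact key
  · rintro ⟨i, t⟩
    simp only
    rw [show ((u t : ℂ) * E n (-((k.val : ℤ) * t.val))) *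
        ((u ⟨(t.val + (n - i.val)) % n, Nat.mod_lt _ t.pos⟩ : ℂ) *
          E n ((k.val : ℤ) * ((⟨(t.val + (n - i.val)) % n, Nat.mod_lt _ t.pos⟩ : Fin n).val)))
        = ((u t : ℂ) * (u ⟨(t.val + (n - i.val)) % n, Nat.mod_lt _ t.pos⟩ : ℂ)) *
          (E n (-((k.val : ℤ) * t.val)) *
            E n ((k.val : ℤ) * (((t.val + (n - i.val)) % n : ℕ) : ℤ))) from by ring]
    rw [← E_add]
    congr 1
    rw [← E_shift n hn k t i]
    congr 1
    ring

end Stmt9Aux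

/-- for `N = n` and `r = f(u)` with `uᵀu = C`, the vector
`x_k = (1/n) ∑_i r_i e^{-jϖki}` (the inverse DFT of `r`, i.e. `R/√n`) has real
nonnegative entries and is the unique element of `X̃(r)`. -/
theorem stmt9 (n : ℕ) (hn : 1 ≤ n) (C : ℝ) (hC : 0 < C) (u : Fin n → ℝ)
    (hu : (∑ t, u t * u t) = C) (r : Fin n → ℝ) (hr : r = autocov n n u) :
    ∃ x : Fin n → ℝ,
      (∀ k : Fin n, (x k : ℂ) = (n : ℂ)⁻¹ *
        ∑ i : Fin n, (r i : ℂ) *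
          Complex.exp (-(Complex.I * (2 * Real.pi / n) * k.val * i.val))) ∧
      (∀ k, 0 ≤ x k) ∧ Xset n n r = {x} := by
  have hn0 : 0 < n := hn
  have hnC : (n : ℂ) ≠ 0 := Nat.cast_ne_zero.mpr hn0.ne'
  subst hr
  set r : Fin n → ℝ := autocov n n u with hr
  set U : Fin n → ℂ :=
    fun k => ∑ t : Fin n, (u t : ℂ) * Stmt9Aux.E n (-((k.val : ℤ) * t.val)) with hU
  have hRS : ∀ k : Fin n,
      ∑ i : Fin n, (r i : ℂ) * Stmt9Aux.E n (-((k.val : ℤ) * i.val))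
        = (Complex.normSq (U k) : ℂ) := by
    intro k
    rw [← Complex.mul_conj]
    exact Stmt9Aux.autocov_dft n hn0 u k
  set x : Fin n → ℝ := fun k => (n : ℝ)⁻¹ * Complex.normSq (U k) with hx
  have hxC : ∀ k : Fin n, (x k : ℂ)
      = (n : ℂ)⁻¹ * ∑ i : Fin n, (r i : ℂ) * Stmt9Aux.E n (-((k.val : ℤ) * i.val)) := by
    intro k
    rw [hRS k]
    simp only [hx]
    push_cast
    ring
  have hxnn : ∀ k, 0 ≤ x k := fun k =>
    mul_nonneg (inv_nonneg.mpr (Nat.cast_nonneg n)) (Complex.normSq_nonneg _)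
  have hEexp : ∀ k i : Fin n,
      Complex.exp (-(Complex.I * (2 * Real.pi / n) * k.val * i.val))
        = Stmt9Aux.E n (-((k.val : ℤ) * i.val)) := by
    intro k i
    rw [Stmt9Aux.E]
    congr 1
    push_cast
    ring
  have hconjU : ∀ k : Fin n,
      (starRingEnd ℂ) (U k) = ∑ s : Fin n, (u s : ℂ) * Stmt9Aux.E n ((k.val : ℤ) * s.val) := by
    intro k
    rw [hU]
    simp only
    rw [map_sum]
    refine Finset.sum_congr rfl fun s _ => ?_
    rw [_root_.map_mul, Complex.conj_ofReal, Stmt9Aux.E_conj, neg_neg]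
  -- x is in Xset
  have hxmul : (Stilde n n).mulVec (fun k => (x k : ℂ)) = fun i => (r i : ℂ) := by
    funext i
    show ∑ l : Fin n, Stilde n n i l * (x l : ℂ) = (r i : ℂ)
    have step1 : ∀ l : Fin n, Stilde n n i l * (x l : ℂ)
        = ∑ m : Fin n, (n : ℂ)⁻¹ * ((r m : ℂ) *
            Stmt9Aux.E n ((l.val : ℤ) * ((i.val : ℤ) - m.val))) := by
      intro l
      rw [Stmt9Aux.Stilde_eq, hxC l, Finset.mul_sum, Finset.mul_sum]
      refine Finset.sum_congr rfl fun m _ => ?_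
      rw [show Stmt9Aux.E n ((i.val : ℤ) * l.val) *
          ((n : ℂ)⁻¹ * ((r m : ℂ) * Stmt9Aux.E n (-((l.val : ℤ) * m.val))))
          = (n : ℂ)⁻¹ * ((r m : ℂ) * (Stmt9Aux.E n ((i.val : ℤ) * l.val) *
              Stmt9Aux.E n (-((l.val : ℤ) * m.val)))) from by ring, ← Stmt9Aux.E_add]
      congr 3
      ring
    rw [Finset.sum_congr rfl fun l _ => step1 l, Finset.sum_comm]
    have step2 : ∀ m : Fin n,
        ∑ l : Fin n, (n : ℂ)⁻¹ * ((r m : ℂ) *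
            Stmt9Aux.E n ((l.val : ℤ) * ((i.val : ℤ) - m.val)))
          = (n : ℂ)⁻¹ * ((r m : ℂ) * (if i = m then (n : ℂ) else 0)) := by
      intro m
      rw [← Finset.mul_sum, ← Finset.mul_sum, Stmt9Aux.E_sum n hn0 i m]
    rw [Finset.sum_congr rfl fun m _ => step2 m]
    rw [Finset.sum_congr rfl fun m _ => by
      rw [show (n : ℂ)⁻¹ * ((r m : ℂ) * (if i = m then (n : ℂ) else 0))
          = if i = m then (n : ℂ)⁻¹ * ((r m : ℂ) * n) else 0 from by
        by_cases h : i = m <;> simp [h]]]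
    rw [Finset.sum_ite_eq]
    simp [hnC]
    field_simp
  have hxsym : ∀ k : Fin n, ∀ hk : 1 ≤ k.val,
      x k = x ⟨n - k.val, Nat.sub_lt k.pos hk⟩ := by
    intro k hk
    have hUconj : U ⟨n - k.val, Nat.sub_lt k.pos hk⟩ = (starRingEnd ℂ) (U k) := by
      rw [hconjU k, hU]
      simp only
      refine Finset.sum_congr rfl fun t _ => ?_
      congr 1
      have hcast : (((n - k.val : ℕ)) : ℤ) = (n : ℤ) - k.val := by
        have := k.isLt; omega
      rw [show (-(((⟨n - k.val, Nat.sub_lt k.pos hk⟩ : Fin n).val : ℤ) * t.val))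
          = -(((n - k.val : ℕ) : ℤ) * t.val) from rfl]
      rw [show (-(((n - k.val : ℕ) : ℤ) * t.val))
          = (k.val : ℤ) * t.val + (n : ℤ) * (-(t.val : ℤ)) from by rw [hcast]; ring]
      rw [Stmt9Aux.E_add, Stmt9Aux.E_nmul n hn0.ne', mul_one]
    show (n : ℝ)⁻¹ * Complex.normSq (U k)
        = (n : ℝ)⁻¹ * Complex.normSq (U ⟨n - k.val, Nat.sub_lt k.pos hk⟩)
    rw [hUconj, Complex.normSq_conj]
  have hxmem : x ∈ Xset n n r := ⟨hxmul, hxnn, hxsym⟩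
  refine ⟨x, ?_, hxnn, ?_⟩
  · intro k
    rw [Finset.sum_congr rfl fun i _ => by rw [hEexp k i]]
    exact hxC k
  · ext y
    simp only [Set.mem_singleton_iff]
    constructor
    · rintro ⟨hy1, hy2, hy3⟩
      funext k
      have h1 := Stmt9Aux.recover n hn0 (fun k => (y k : ℂ)) k
      have h2 := Stmt9Aux.recover n hn0 (fun k => (x k : ℂ)) k
      rw [hy1] at h1
      rw [hxmul] at h2
      have h3 : (n : ℂ) * (y k : ℂ) = (n : ℂ) * (x k : ℂ) := h1.symm.trans h2
      have h4 : (y k : ℂ) = (x k : ℂ) := mul_left_cancel₀ hnC h3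
      exact_mod_cast h4
    · rintro rfl
      exact hxmem
end
end

section
/- Suppose N is even. For every Λ̃ ∈ Λ_Q, every u ∈ ℝ^N, and every 0 ≤ i ≤ n−1: r_i = Σ_{k=0}^{N−1} cos(ϖik)·|V_k|², where V = Λ̃W̃u; that is, every pair (Λ̃W̃, S̃(1/2)) with Λ̃ ∈ Λ_Q is an embedding of the quadratic map f (note S̃(1/2)_{i,k} = cos(ϖik)). -/
open scoped BigOperators
open Complex Matrix

noncomputable section

open Finset ComplexConjugate

/-!
Writing `U = W̃ u`, expanding `|U_k|²` and summing the characters `k ↦ e^{jϖmk}` over `ℤ/N`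
gives the circular correlation identity `∑ₖ e^{jϖik} |U_k|² = r_i`; its real part is the claim
for `Λ̃ = 1`. The weight `cos(ϖik)` is unchanged under `k ↦ N - k`, and `Λ̃ ∈ Λ_Q` acts on each
pair `(U_k, U_{N-k})` by a unitary `2 × 2` block, so it preserves `|U_k|² + |U_{N-k}|²` and hence
the weighted sum.
-/

lemma Fin.val_neg_of_ne_zero {N : ℕ} [NeZero N] {a : Fin N} (ha : a ≠ 0) :
    (-a).val = N - a.val := by
  have : 0 < a.val := Fin.pos_iff_ne_zero.mpr ha
  rw [Fin.val_neg', Nat.mod_eq_of_lt (by omega)]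

lemma Real.cos_two_pi_div_mul_val_neg {N : ℕ} [NeZero N] (i : ℕ) (k : Fin N) :
    Real.cos (2 * Real.pi / N * i * (-k : Fin N).val) =
      Real.cos (2 * Real.pi / N * i * k.val) := by
  by_cases hk : k = 0
  · simp [hk]
  have hN : (N : ℝ) ≠ 0 := Nat.cast_ne_zero.mpr (NeZero.ne N)
  rw [Fin.val_neg_of_ne_zero hk, Nat.cast_sub k.isLt.le, ← Real.cos_nat_mul_two_pi_sub _ i]
  congr 1
  field_simp
  ring

lemma IsPrimitiveRoot.sum_zpow_pow_eq_ite {K : Type*} [Field K] {ζ : K} {N : ℕ}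
    (h : IsPrimitiveRoot ζ N) (m : ℤ) :
    ∑ k ∈ range N, (ζ ^ m) ^ k = if (N : ℤ) ∣ m then (N : K) else 0 := by
  split_ifs with hm
  · simp [(h.zpow_eq_one_iff_dvd m).mpr hm]
  · rw [geom_sum_eq (mt (h.zpow_eq_one_iff_dvd m).mp hm), ← zpow_natCast, ← _root_.zpow_mul,
      mul_comm, _root_.zpow_mul, zpow_natCast, h.pow_eq_one, _root_.one_zpow, sub_self, zero_div]

section Unitary

variable {ι : Type*} [Fintype ι]

lemma star_mulVec_dotProduct_mulVec {R : Type*} [Semiring R] [StarRing R] [DecidableEq ι]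
    {Q : Matrix ι ι R} (hQ : Qᴴ * Q = 1) (v : ι → R) :
    star (Q *ᵥ v) ⬝ᵥ (Q *ᵥ v) = star v ⬝ᵥ v := by
  rw [star_mulVec, ← dotProduct_mulVec, mulVec_mulVec, hQ, one_mulVec]

lemma star_dotProduct_self_eq_sum_sq_norm (v : ι → ℂ) :
    star v ⬝ᵥ v = ((∑ k, ‖v k‖ ^ 2 : ℝ) : ℂ) := by
  simp only [dotProduct, Pi.star_apply, RCLike.star_def, Complex.conj_mul', ofReal_sum,
    ofReal_pow]

end Unitary

lemma sum_mul_eq_sum_mul_of_add_comp_neg {G R : Type*} [InvolutiveNeg G] [Fintype G] [Field R]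
    [CharZero R] {c g h : G → R} (hc : ∀ k, c (-k) = c k)
    (hgh : ∀ k, g k + g (-k) = h k + h (-k)) :
    ∑ k, c k * g k = ∑ k, c k * h k := by
  have hsymm : ∀ f : G → R, 2 * ∑ k, c k * f k = ∑ k, c k * (f k + f (-k)) := fun f => by
    rw [two_mul]
    nth_rewrite 2 [← Equiv.sum_comp (Equiv.neg G)]
    simp only [Equiv.neg_apply, hc, ← sum_add_distrib, mul_add]
  exact mul_left_cancel₀ two_ne_zero (by rw [hsymm, hsymm]; simp only [hgh])

section DFT

variable {N : ℕ} [NeZero N]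

lemma sum_exp_mul_eq_ite (m : ℤ) :
    ∑ k : Fin N, exp (I * (2 * Real.pi / N) * m * k) = if (N : ℤ) ∣ m then (N : ℂ) else 0 := by
  rw [← (isPrimitiveRoot_exp N (NeZero.ne N)).sum_zpow_pow_eq_ite, ← Fin.sum_univ_eq_sum_range]
  refine sum_congr rfl fun k _ => ?_
  rw [← zpow_natCast, ← _root_.zpow_mul, ← exp_int_mul]
  congr 1
  push_cast
  field_simp

lemma intCast_dvd_add_sub_iff (s t i : Fin N) : (N : ℤ) ∣ s + i - t ↔ s = t - i := by
  have hmod : (s.val + i.val) % N = t.val ↔ t.val ≡ s.val + i.val [MOD N] := by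
    rw [Nat.ModEq, Nat.mod_eq_of_lt t.isLt, eq_comm]
  rw [eq_sub_iff_add_eq, Fin.ext_iff, Fin.val_add, hmod, Nat.modEq_iff_dvd]
  push_cast
  rfl

lemma sum_exp_mul_dft_mul_conj_dft (i t s : Fin N) :
    ∑ k : Fin N, exp (↑(2 * Real.pi / N * i * k) * I) * (dft N k t * conj (dft N k s)) =
      if s = t - i then 1 else 0 := by
  have hN : (N : ℂ) ≠ 0 := Nat.cast_ne_zero.mpr (NeZero.ne N)
  have hterm : ∀ k : Fin N,
      exp (↑(2 * Real.pi / N * i * k) * I) * (dft N k t * conj (dft N k s)) =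
        (N : ℂ)⁻¹ * exp (I * (2 * Real.pi / N) * ((s + i - t : ℤ) : ℂ) * k) := by
    intro k
    have hsqrt : (N : ℂ)⁻¹ = (Real.sqrt N : ℂ)⁻¹ * (Real.sqrt N : ℂ)⁻¹ := by
      rw [← mul_inv, ← ofReal_mul, Real.mul_self_sqrt (Nat.cast_nonneg N), ofReal_natCast]
    have hexp : ∀ a b c d : ℂ, exp a * (d * exp b * (d * exp c)) = d * d * exp (a + b + c) := by
      intros
      rw [Complex.exp_add, Complex.exp_add]
      ring
    simp only [dft, map_mul, map_inv₀, conj_ofReal, ← Complex.exp_conj, map_neg, conj_I,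
      map_div₀, map_natCast, map_ofNat]
    rw [hsqrt, hexp]
    congr 2
    push_cast
    ring
  rw [sum_congr rfl fun k _ => hterm k, ← mul_sum, sum_exp_mul_eq_ite]
  simp only [intCast_dvd_add_sub_iff]
  split_ifs <;> simp [hN]

lemma sum_exp_mul_normSq_dft_mulVec (x : Fin N → ℂ) (i : Fin N) :
    ∑ k : Fin N, exp (↑(2 * Real.pi / N * i * k) * I) * normSq ((dft N *ᵥ x) k) =
      ∑ t, x t * conj (x (t - i)) := by
  calc ∑ k : Fin N, exp (↑(2 * Real.pi / N * i * k) * I) * normSq ((dft N *ᵥ x) k)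
      = ∑ t, ∑ s, x t * conj (x s) *
          ∑ k : Fin N, exp (↑(2 * Real.pi / N * i * k) * I) * (dft N k t * conj (dft N k s)) := by
        simp only [← mul_conj, mulVec, dotProduct, map_sum, map_mul]
        simp_rw [Fintype.sum_mul_sum]
        simp only [mul_sum]
        rw [sum_comm]
        refine sum_congr rfl fun t _ => ?_
        rw [sum_comm]
        exact sum_congr rfl fun s _ => sum_congr rfl fun k _ => by ring
    _ = ∑ t, ∑ s, x t * conj (x s) * if s = t - i then 1 else 0 := by
        simp only [sum_exp_mul_dft_mul_conj_dft]
    _ = ∑ t, x t * conj (x (t - i)) := by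
        simp

lemma sum_cos_mul_sq_norm_dft_mulVec (u : Fin N → ℝ) (i : Fin N) :
    ∑ k : Fin N, Real.cos (2 * Real.pi / N * i * k) * ‖(dft N *ᵥ fun t => (u t : ℂ)) k‖ ^ 2 =
      ∑ t, u t * u (t - i) := by
  have h := congrArg re (sum_exp_mul_normSq_dft_mulVec (fun t => (u t : ℂ)) i)
  simp only [re_sum, re_mul_ofReal, exp_ofReal_mul_I_re, conj_ofReal, ← ofReal_mul,
    ofReal_re] at h
  simpa only [Complex.sq_norm] using h

end DFT

/- In `Fin N` the block partner `N - a` of `a ≠ 0` is `-a`; the fixed points of `a ↦ -a` are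
`a = 0` and `2 a = N`, exactly the indices where `memLamQ` puts a `1` on the diagonal. -/
namespace memLamQ

variable {N : ℕ} [NeZero N] {L : Matrix (Fin N) (Fin N) ℂ}

lemma apply_eq_zero (hL : memLamQ L) {a b : Fin N} (hb : b ≠ a) (hb' : b ≠ -a) :
    L a b = 0 := by
  refine hL.2.2.2 a b ?_
  rintro (h | h)
  · exact hb h.symm
  · have ha : a ≠ 0 := by rintro rfl; rw [Fin.val_zero] at h; omega
    exact hb' (Fin.ext (by rw [Fin.val_neg_of_ne_zero ha]; omega))

lemma mulVec_apply_of_neg_eq (hL : memLamQ L) (U : Fin N → ℂ) {a : Fin N} (ha : -a = a) :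
    (L *ᵥ U) a = U a := by
  have hdiag : L a a = 1 := by
    by_cases h0 : a = 0
    · exact hL.1 a (by simp [h0])
    · have := Fin.val_neg_of_ne_zero h0
      rw [ha] at this
      exact hL.2.1 a (by omega)
  rw [mulVec, dotProduct, sum_eq_single a (fun b _ hb => by
    rw [apply_eq_zero hL hb (by rwa [ha]), zero_mul]) (by simp), hdiag, one_mul]

lemma mulVec_apply_of_neg_ne (hL : memLamQ L) (U : Fin N → ℂ) {a : Fin N} (ha : -a ≠ a) :
    (L *ᵥ U) a = L a a * U a + L a (-a) * U (-a) := by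
  rw [mulVec, dotProduct, sum_eq_add_of_mem a (-a) (mem_univ a) (mem_univ _) ha.symm]
  intro b _ hb
  rw [apply_eq_zero hL hb.1 hb.2, zero_mul]

lemma sq_norm_mulVec_add_of_lt (hL : memLamQ L) (U : Fin N → ℂ) {a : Fin N} (ha : a ≠ 0)
    (haN : 2 * a.val < N) :
    ‖(L *ᵥ U) a‖ ^ 2 + ‖(L *ᵥ U) (-a)‖ ^ 2 = ‖U a‖ ^ 2 + ‖U (-a)‖ ^ 2 := by
  have hsum : a.val + (-a).val = N := by rw [Fin.val_neg_of_ne_zero ha]; omega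
  have hne : -a ≠ a := fun h => by rw [h] at hsum; omega
  set Q := !![L a a, L a (-a); L (-a) a, L (-a) (-a)]
  have hQ : Qᴴ * Q = 1 := (hL.2.2.1 a (-a) (Fin.pos_iff_ne_zero.mpr ha) haN hsum).1
  have hV : ![(L *ᵥ U) a, (L *ᵥ U) (-a)] = Q *ᵥ ![U a, U (-a)] := by
    ext j
    fin_cases j
    · simp [Q, mulVec_apply_of_neg_ne hL U hne]; ring
    · simp [Q, mulVec_apply_of_neg_ne hL U (a := -a) (by rwa [neg_neg, ne_comm])]; ring
  have := star_mulVec_dotProduct_mulVec hQ ![U a, U (-a)]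
  rw [← hV, star_dotProduct_self_eq_sum_sq_norm, star_dotProduct_self_eq_sum_sq_norm,
    ofReal_inj] at this
  simpa using this

lemma sq_norm_mulVec_add (hL : memLamQ L) (U : Fin N → ℂ) (a : Fin N) :
    ‖(L *ᵥ U) a‖ ^ 2 + ‖(L *ᵥ U) (-a)‖ ^ 2 = ‖U a‖ ^ 2 + ‖U (-a)‖ ^ 2 := by
  by_cases ha : -a = a
  · rw [ha, mulVec_apply_of_neg_eq hL U ha]
  have ha0 : a ≠ 0 := by rintro rfl; simp at ha
  have hneg := Fin.val_neg_of_ne_zero ha0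
  rcases lt_trichotomy (2 * a.val) N with hlt | heq | hgt
  · exact sq_norm_mulVec_add_of_lt hL U ha0 hlt
  · exact absurd (Fin.ext (by omega)) ha
  · have h := sq_norm_mulVec_add_of_lt hL U (a := -a) (neg_ne_zero.mpr ha0) (by omega)
    rw [neg_neg] at h
    linarith

lemma sum_mul_sq_norm_mulVec (hL : memLamQ L) (U : Fin N → ℂ) {c : Fin N → ℝ}
    (hc : ∀ k, c (-k) = c k) :
    ∑ k, c k * ‖(L *ᵥ U) k‖ ^ 2 = ∑ k, c k * ‖U k‖ ^ 2 :=
  sum_mul_eq_sum_mul_of_add_comp_neg hc (sq_norm_mulVec_add hL U)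

end memLamQ

lemma autocov_eq_sum_mul_sub {N n : ℕ} (hnN : n ≤ N) (u : Fin N → ℝ) (i : Fin n) :
    autocov N n u i = ∑ t, u t * u (t - Fin.castLE hnN i) := by
  refine sum_congr rfl fun t _ => ?_
  congr 2
  ext
  simp [Fin.sub_def, add_comm]

theorem stmt12_general (N n : ℕ) (hNn : n ≤ N)
    (L : Matrix (Fin N) (Fin N) ℂ) (hL : memLamQ L) (u : Fin N → ℝ)
    (V : Fin N → ℂ) (hV : V = L.mulVec ((dft N).mulVec fun t => (u t : ℂ))) :
    ∀ i : Fin n, (autocov N n u i : ℂ) =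
      ∑ k : Fin N, (Real.cos (2 * Real.pi / N * i.val * k.val) : ℂ) *
        (‖V k‖ : ℂ) ^ 2 := by
  intro i
  have : NeZero N := ⟨by have := i.isLt; omega⟩
  subst hV
  have hcorr := sum_cos_mul_sq_norm_dft_mulVec u (Fin.castLE hNn i)
  rw [← hL.sum_mul_sq_norm_mulVec _ (Real.cos_two_pi_div_mul_val_neg _)] at hcorr
  exact_mod_cast (autocov_eq_sum_mul_sub hNn u i).trans hcorr.symm

/-- for even `N`, every `Λ̃ ∈ Λ_Q`, every `u ∈ ℝ^N`, and every
`0 ≤ i ≤ n-1`: `r_i = ∑_k cos(ϖik) |V_k|²` with `V = Λ̃ W̃ u`; that is, every pair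
`(Λ̃W̃, S̃(1/2))` with `Λ̃ ∈ Λ_Q` is an embedding of `f`. -/
theorem stmt12 (N n : ℕ) (hn : 1 ≤ n) (hNn : n ≤ N) (hN : Even N)
    (L : Matrix (Fin N) (Fin N) ℂ) (hL : memLamQ L) (u : Fin N → ℝ)
    (V : Fin N → ℂ) (hV : V = L.mulVec ((dft N).mulVec fun t => (u t : ℂ))) :
    ∀ i : Fin n, (autocov N n u i : ℂ) =
      ∑ k : Fin N, (Real.cos (2 * Real.pi / N * i.val * k.val) : ℂ) *
        (‖V k‖ : ℂ) ^ 2 :=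
  stmt12_general N n hNn L hL u V hV
end
end

section
/- Let X̃ = {x ∈ ℝ^N : Σ_{k=0}^{N−1} x_k = C, x_k ≥ 0 for all k, and x_k = x_{N−k} for 1 ≤ k ≤ N−1}. Then X̃ is convex, S̃x has real entries for every x ∈ X̃, and ℱ = {f(u) : u ∈ ℝ^N, uᵀu = C} = {y ∈ ℝ^n : y = S̃x for some x ∈ X̃}; in particular, ℱ is a convex subset of ℝ^n. -/
open scoped BigOperators
open Complex Matrix

noncomputable section

/-! Wiener–Khinchin on `ZMod N`: the DFT of the circular autocorrelation of `u` is the power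
spectrum `|𝓕 u|²`, so `f(u) = S̃ x` with `x k = |𝓕 u k|² / N`, which is nonnegative, even (as `u`
is real) and has total mass `uᵀu`. Conversely, for such an `x` the inverse DFT of `√x` is real,
since `√x` is real and even, and its power spectrum is `x`. Convexity of `ℱ` then follows because
`ℱ` is a linear image of the convex set `X̃`. -/

open ZMod ComplexConjugate

namespace ZMod

variable {N : ℕ} [NeZero N]

lemma conj_stdAddChar (j : ZMod N) : conj (stdAddChar j) = stdAddChar (-j) := by
  rw [stdAddChar_apply, stdAddChar_apply, AddChar.map_neg_eq_inv, Circle.coe_inv_eq_conj]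

lemma conj_dft (Φ : ZMod N → ℂ) (k : ZMod N) : conj (𝓕 Φ k) = 𝓕 (conj ∘ Φ) (-k) := by
  simp only [dft_apply, map_sum, smul_eq_mul, map_mul, conj_stdAddChar, Function.comp_apply,
    mul_neg, neg_neg]

def autocorr (u : ZMod N → ℂ) (d : ZMod N) : ℂ := ∑ t, u t * conj (u (t - d))

lemma dft_autocorr (u : ZMod N → ℂ) (k : ZMod N) : 𝓕 (autocorr u) k = normSq (𝓕 u k) := by
  rw [← mul_conj, conj_dft, dft_apply, dft_apply, dft_apply, Finset.sum_mul_sum]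
  simp only [autocorr, smul_eq_mul, Finset.mul_sum, Function.comp_apply]
  rw [Finset.sum_comm]
  refine Finset.sum_congr rfl fun t _ ↦ ?_
  refine Fintype.sum_equiv (Equiv.subLeft t) _ _ fun s ↦ ?_
  have : stdAddChar (-(s * k)) = stdAddChar (-(t * k)) * stdAddChar (-((t - s) * -k)) := by
    rw [← AddChar.map_add_eq_mul]; ring_nf
  simp only [Equiv.subLeft_apply, this]; ring

lemma autocorr_eq_sum (u : ZMod N → ℂ) (d : ZMod N) :
    autocorr u d = ∑ k, stdAddChar (k * d) * ((normSq (𝓕 u k) / N : ℝ) : ℂ) := by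
  have : autocorr u = 𝓕⁻ fun k ↦ (normSq (𝓕 u k) : ℂ) := by
    rw [LinearEquiv.eq_symm_apply]; exact funext (dft_autocorr u)
  rw [this, invDFT_apply, Finset.smul_sum]
  refine Finset.sum_congr rfl fun k _ ↦ ?_
  push_cast; simp only [smul_eq_mul]; ring

lemma autocorr_zero (u : ZMod N → ℂ) : autocorr u 0 = ∑ t, u t * conj (u t) := by
  simp [autocorr]

lemma conj_dft_of_real_of_even {Φ : ZMod N → ℂ} (hreal : conj ∘ Φ = Φ) (heven : Φ.Even)
    (k : ZMod N) : conj (𝓕 Φ k) = 𝓕 Φ k := by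
  rw [conj_dft, hreal, dft_even_iff.2 heven]

lemma exists_real_normSq_dft_eq {P : ZMod N → ℝ} (hP : 0 ≤ P) (heven : P.Even) :
    ∃ u : ZMod N → ℝ, ∀ k, normSq (𝓕 (ofReal ∘ u) k) = P k := by
  set Ψ : ZMod N → ℂ := fun k ↦ (√(P k) : ℂ)
  have hΨreal : conj ∘ Ψ = Ψ := funext fun k ↦ conj_ofReal _
  have hΨeven : Ψ.Even := fun k ↦ by simp only [Ψ, heven k]
  have hreal : ∀ j, conj (𝓕⁻ Ψ j) = 𝓕⁻ Ψ j := fun j ↦ by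
    rw [invDFT_apply', smul_eq_mul, map_mul, map_inv₀, map_natCast,
      conj_dft_of_real_of_even hΨreal hΨeven]
  refine ⟨fun j ↦ (𝓕⁻ Ψ j).re, fun k ↦ ?_⟩
  have : (ofReal ∘ fun j ↦ (𝓕⁻ Ψ j).re) = 𝓕⁻ Ψ := funext fun j ↦ conj_eq_iff_re.1 (hreal j)
  rw [this, LinearEquiv.apply_symm_apply, normSq_ofReal, Real.mul_self_sqrt (hP k)]

lemma im_sum_stdAddChar_mul_eq_zero {P : ZMod N → ℝ} (heven : P.Even) (d : ZMod N) :
    (∑ k, stdAddChar (k * d) * (P k : ℂ)).im = 0 := by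
  have : ∑ k, stdAddChar (k * d) * (P k : ℂ) = 𝓕 (ofReal ∘ P) (-d) := by
    simp only [dft_apply, mul_neg, neg_neg, smul_eq_mul, Function.comp_apply]
  rw [this, ← conj_eq_iff_im]
  exact conj_dft_of_real_of_even (funext fun k ↦ conj_ofReal _) (fun k ↦ by simp [heven k]) _

lemma normSq_dft_neg_of_real (u : ZMod N → ℝ) (k : ZMod N) :
    normSq (𝓕 (ofReal ∘ u) (-k)) = normSq (𝓕 (ofReal ∘ u) k) := by
  have : conj ∘ (ofReal ∘ u) = ofReal ∘ u := funext fun j ↦ conj_ofReal _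
  rw [← this, ← conj_dft, normSq_conj, this]

theorem exists_autocorr_eq_iff (r : ZMod N → ℂ) :
    (∃ u : ZMod N → ℝ, autocorr (ofReal ∘ u) = r) ↔
      ∃ P : ZMod N → ℝ, 0 ≤ P ∧ P.Even ∧ ∀ d, r d = ∑ k, stdAddChar (k * d) * P k := by
  constructor
  · rintro ⟨u, rfl⟩
    refine ⟨fun k ↦ normSq (𝓕 (ofReal ∘ u) k) / N,
      fun k ↦ div_nonneg (normSq_nonneg _) N.cast_nonneg, fun k ↦ by simp only [normSq_dft_neg_of_real], autocorr_eq_sum _⟩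
  · rintro ⟨P, hP, heven, hr⟩
    obtain ⟨u, hu⟩ := exists_real_normSq_dft_eq (P := (N : ℝ) • P)
      (smul_nonneg (Nat.cast_nonneg N) hP) (fun k ↦ by simp only [Pi.smul_apply, heven k])
    refine ⟨u, funext fun d ↦ ?_⟩
    rw [autocorr_eq_sum, hr]
    simp only [hu, Pi.smul_apply, smul_eq_mul, mul_div_cancel_left₀ _ (NeZero.ne (N : ℝ))]

lemma stdAddChar_natCast (j : ℕ) :
    stdAddChar (j : ZMod N) = Complex.exp (2 * Real.pi * I * j / N) := by
  simpa using stdAddChar_coe (N := N) j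

lemma val_finEquiv (k : Fin N) : (finEquiv N k).val = k.val := by
  obtain ⟨m, rfl⟩ : ∃ m, N = m + 1 := Nat.exists_eq_succ_of_ne_zero (NeZero.ne N)
  rfl

lemma finEquiv_mk_add_sub_mod (t : Fin N) {i : ℕ} (hi : i ≤ N) :
    finEquiv N ⟨(t.val + (N - i)) % N, Nat.mod_lt _ t.pos⟩ = finEquiv N t - i := by
  have : finEquiv N t - i = finEquiv N t + ((N - i : ℕ) : ZMod N) := by
    rw [Nat.cast_sub hi, natCast_self, zero_sub, sub_eq_add_neg]
  rw [this]
  apply val_injective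
  rw [val_add, val_natCast, Nat.add_mod_mod, val_finEquiv, val_finEquiv]

lemma finEquiv_mk_sub (k : Fin N) (hk : 1 ≤ k.val) :
    finEquiv N ⟨N - k.val, Nat.sub_lt k.pos hk⟩ = -finEquiv N k := by
  apply val_injective
  rw [neg_val, if_neg, val_finEquiv, val_finEquiv]
  rw [← (finEquiv N).map_zero, (finEquiv N).injective.eq_iff]
  rintro rfl
  simp at hk

end ZMod

lemma Convex.setOf_exists_ofReal_eq_mulVec {ι κ : Type*} [Fintype κ] {K : Set (κ → ℝ)}
    (hK : Convex ℝ K) (S : Matrix ι κ ℂ) :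
    Convex ℝ {y : ι → ℝ | ∃ x ∈ K, ∀ i, (y i : ℂ) = (S *ᵥ fun k ↦ (x k : ℂ)) i} := by
  rintro y₁ ⟨x₁, hx₁, h₁⟩ y₂ ⟨x₂, hx₂, h₂⟩ a b ha hb hab
  refine ⟨a • x₁ + b • x₂, hK hx₁ hx₂ ha hb hab, fun i ↦ ?_⟩
  have : (fun k ↦ ((a • x₁ + b • x₂) k : ℂ))
      = (a : ℂ) • (fun k ↦ (x₁ k : ℂ)) + (b : ℂ) • fun k ↦ (x₂ k : ℂ) := by
    ext k; simp
  rw [this, mulVec_add, mulVec_smul, mulVec_smul]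
  simp [h₁, h₂]

/-- The paper's `X̃`. -/
def symmetricSimplex (N : ℕ) (C : ℝ) : Set (Fin N → ℝ) :=
  {x | (∑ k, x k) = C ∧ (∀ k, 0 ≤ x k) ∧
    (∀ k : Fin N, ∀ hk : 1 ≤ k.val, x k = x ⟨N - k.val, Nat.sub_lt k.pos hk⟩)}

lemma convex_symmetricSimplex (N : ℕ) (C : ℝ) : Convex ℝ (symmetricSimplex N C) := by
  rintro x ⟨hxC, hx0, hxs⟩ y ⟨hyC, hy0, hys⟩ a b ha hb hab
  refine ⟨?_, fun k ↦ ?_, fun k hk ↦ ?_⟩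
  · simp only [Pi.add_apply, Pi.smul_apply, smul_eq_mul, Finset.sum_add_distrib,
      ← Finset.mul_sum, hxC, hyC]
    rw [← add_mul, hab, one_mul]
  · exact add_nonneg (mul_nonneg ha (hx0 k)) (mul_nonneg hb (hy0 k))
  · simp only [Pi.add_apply, Pi.smul_apply, hxs k hk, hys k hk]

section

variable {N : ℕ} [NeZero N]

lemma Stilde_mulVec_apply {n : ℕ} (x : Fin N → ℝ) (i : Fin n) :
    (Stilde N n *ᵥ fun k ↦ (x k : ℂ)) i
      = ∑ j : ZMod N, stdAddChar (j * (i.val : ZMod N)) * ((x ∘ (finEquiv N).symm) j : ℂ) := by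
  rw [mulVec, dotProduct, ← (finEquiv N).toEquiv.sum_comp]
  refine Finset.sum_congr rfl fun k _ ↦ ?_
  simp only [RingEquiv.toEquiv_eq_coe, EquivLike.coe_coe, Function.comp_apply,
    RingEquiv.symm_apply_apply]
  rw [← natCast_zmod_val (finEquiv N k), val_finEquiv, ← Nat.cast_mul,
    stdAddChar_natCast, Stilde]
  congr 2
  push_cast
  ring

lemma autocov_eq_autocorr {n : ℕ} (hn : n ≤ N) (u : Fin N → ℝ) (i : Fin n) :
    (autocov N n u i : ℂ) = autocorr (ofReal ∘ u ∘ (finEquiv N).symm) i.val := by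
  rw [autocov, autocorr, ← (finEquiv N).toEquiv.sum_comp]
  push_cast
  refine Finset.sum_congr rfl fun t _ ↦ ?_
  simp only [RingEquiv.toEquiv_eq_coe, EquivLike.coe_coe, Function.comp_apply,
    RingEquiv.symm_apply_apply, conj_ofReal, ← finEquiv_mk_add_sub_mod t (i.2.le.trans hn)]

lemma forall_eq_apply_mk_sub_iff_even (x : Fin N → ℝ) :
    (∀ k : Fin N, ∀ hk : 1 ≤ k.val, x k = x ⟨N - k.val, Nat.sub_lt k.pos hk⟩) ↔
      (x ∘ (finEquiv N).symm).Even := by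
  set e := finEquiv N
  have key (k : Fin N) (hk : 1 ≤ k.val) : e.symm (-e k) = ⟨N - k.val, Nat.sub_lt k.pos hk⟩ := by
    rw [← finEquiv_mk_sub k hk, RingEquiv.symm_apply_apply]
  constructor
  · intro h a
    obtain ⟨k, rfl⟩ := e.surjective a
    rcases Nat.eq_zero_or_pos k.val with hk | hk
    · rw [show k = 0 from Fin.ext hk, map_zero, neg_zero]
    · simp only [Function.comp_apply, key k hk, RingEquiv.symm_apply_apply, ← h k hk]
  · intro h k hk
    have := h (e k)
    simp only [Function.comp_apply, key k hk, RingEquiv.symm_apply_apply] at this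
    exact this.symm

lemma im_Stilde_mulVec_eq_zero {n : ℕ} {x : Fin N → ℝ}
    (hx : ∀ k : Fin N, ∀ hk : 1 ≤ k.val, x k = x ⟨N - k.val, Nat.sub_lt k.pos hk⟩) (i : Fin n) :
    ((Stilde N n *ᵥ fun k ↦ (x k : ℂ)) i).im = 0 := by
  rw [Stilde_mulVec_apply]
  exact im_sum_stdAddChar_mul_eq_zero ((forall_eq_apply_mk_sub_iff_even x).1 hx) _

lemma sum_mul_self_eq_autocorr_zero (u : Fin N → ℝ) :
    ((∑ t, u t * u t : ℝ) : ℂ) = autocorr (ofReal ∘ u ∘ (finEquiv N).symm) 0 := by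
  rw [autocorr_zero, ← (finEquiv N).toEquiv.sum_comp]
  simp

lemma sum_eq_sum_stdAddChar_mul_zero (x : Fin N → ℝ) :
    ((∑ k, x k : ℝ) : ℂ) = ∑ j, stdAddChar (j * 0) * ((x ∘ (finEquiv N).symm) j : ℂ) := by
  rw [← (finEquiv N).toEquiv.sum_comp]
  simp

lemma Fset_eq_setOf_Stilde_mulVec {n : ℕ} (hn : n ≤ N) (C : ℝ) :
    Fset N n C = {y | ∃ x ∈ symmetricSimplex N C,
      ∀ i, (y i : ℂ) = (Stilde N n *ᵥ fun k ↦ (x k : ℂ)) i} := by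
  ext y
  constructor
  · rintro ⟨u, huC, rfl⟩
    obtain ⟨P, hP0, hPeven, hP⟩ :=
      (exists_autocorr_eq_iff _).1 ⟨u ∘ (finEquiv N).symm, rfl⟩
    have hPe : (P ∘ finEquiv N) ∘ (finEquiv N).symm = P := by ext; simp
    refine ⟨P ∘ finEquiv N, ⟨?_, fun k ↦ hP0 _, (forall_eq_apply_mk_sub_iff_even _).2 (by rwa [hPe])⟩, fun i ↦ ?_⟩
    · have := sum_eq_sum_stdAddChar_mul_zero (P ∘ finEquiv N)
      rw [hPe, ← hP, ← sum_mul_self_eq_autocorr_zero, huC] at this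
      exact_mod_cast this
    · rw [autocov_eq_autocorr hn, hP, Stilde_mulVec_apply, hPe]
  · rintro ⟨x, ⟨hxC, hx0, hxs⟩, hy⟩
    obtain ⟨u, hu⟩ := (exists_autocorr_eq_iff _).2
      ⟨x ∘ (finEquiv N).symm, fun k ↦ hx0 _, (forall_eq_apply_mk_sub_iff_even x).1 hxs, fun d ↦ rfl⟩
    have hue : (u ∘ finEquiv N) ∘ (finEquiv N).symm = u := by ext; simp
    refine ⟨u ∘ finEquiv N, ?_, funext fun i ↦ ?_⟩
    · have := sum_mul_self_eq_autocorr_zero (u ∘ finEquiv N)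
      simp only [hue, hu, ← sum_eq_sum_stdAddChar_mul_zero, hxC] at this
      exact_mod_cast this
    · have := autocov_eq_autocorr hn (u ∘ finEquiv N) i
      simp only [hue, hu, ← Stilde_mulVec_apply, ← hy] at this
      exact_mod_cast this

end

theorem stmt19_general (N n : ℕ) (hn : 1 ≤ n) (hNn : n ≤ N) (C : ℝ) :
    Convex ℝ {x : Fin N → ℝ | (∑ k, x k) = C ∧ (∀ k, 0 ≤ x k) ∧
      (∀ k : Fin N, ∀ hk : 1 ≤ k.val, x k = x ⟨N - k.val, Nat.sub_lt k.pos hk⟩)} ∧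
    (∀ x ∈ {x : Fin N → ℝ | (∑ k, x k) = C ∧ (∀ k, 0 ≤ x k) ∧
        (∀ k : Fin N, ∀ hk : 1 ≤ k.val, x k = x ⟨N - k.val, Nat.sub_lt k.pos hk⟩)},
      ∀ i : Fin n, (((Stilde N n).mulVec fun k => (x k : ℂ)) i).im = 0) ∧
    Fset N n C = {y : Fin n → ℝ |
      ∃ x ∈ {x : Fin N → ℝ | (∑ k, x k) = C ∧ (∀ k, 0 ≤ x k) ∧
        (∀ k : Fin N, ∀ hk : 1 ≤ k.val, x k = x ⟨N - k.val, Nat.sub_lt k.pos hk⟩)},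
      ∀ i : Fin n, (y i : ℂ) = ((Stilde N n).mulVec fun k => (x k : ℂ)) i} ∧
    Convex ℝ (Fset N n C) := by
  have : NeZero N := ⟨by omega⟩
  refine ⟨convex_symmetricSimplex N C, fun x hx ↦ im_Stilde_mulVec_eq_zero hx.2.2,
    Fset_eq_setOf_Stilde_mulVec hNn C, ?_⟩
  rw [Fset_eq_setOf_Stilde_mulVec hNn C]
  exact (convex_symmetricSimplex N C).setOf_exists_ofReal_eq_mulVec _

/-- the set `X̃` (simplex with conjugate symmetry and total mass `C`)
is convex, `S̃x` is real for every `x ∈ X̃`, and `ℱ = {f(u) : uᵀu = C} = S̃·X̃`;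
in particular `ℱ` is convex. -/
theorem stmt19 (N n : ℕ) (hn : 1 ≤ n) (hNn : n ≤ N) (C : ℝ) (hC : 0 < C) :
    Convex ℝ {x : Fin N → ℝ | (∑ k, x k) = C ∧ (∀ k, 0 ≤ x k) ∧
      (∀ k : Fin N, ∀ hk : 1 ≤ k.val, x k = x ⟨N - k.val, Nat.sub_lt k.pos hk⟩)} ∧
    (∀ x ∈ {x : Fin N → ℝ | (∑ k, x k) = C ∧ (∀ k, 0 ≤ x k) ∧
        (∀ k : Fin N, ∀ hk : 1 ≤ k.val, x k = x ⟨N - k.val, Nat.sub_lt k.pos hk⟩)},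
      ∀ i : Fin n, (((Stilde N n).mulVec fun k => (x k : ℂ)) i).im = 0) ∧
    Fset N n C = {y : Fin n → ℝ |
      ∃ x ∈ {x : Fin N → ℝ | (∑ k, x k) = C ∧ (∀ k, 0 ≤ x k) ∧
        (∀ k : Fin N, ∀ hk : 1 ≤ k.val, x k = x ⟨N - k.val, Nat.sub_lt k.pos hk⟩)},
      ∀ i : Fin n, (y i : ℂ) = ((Stilde N n).mulVec fun k => (x k : ℂ)) i} ∧
    Convex ℝ (Fset N n C) :=
  stmt19_general N n hn hNn C
end
end
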